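/- arXiv:1805.10086 — 9 statements merged into one kernel-verified Lean document; each statement's English description precedes it below -/
import Mathlib

section
/- Let G be a finite simple graph and let κ, τ : V(G) → ℤ be functions such that d_G(u) = τ(u) + κ(u) for every vertex u. Then a set I of vertices of G is κ-degenerate in G if and only if V(G) \ I is a dynamic monopoly of (G, τ). -/
open SimpleGraph

universe u

/-- `H` is closed under the activation rule: any vertex with at least `τ u` neighbors
in `H` belongs to `H`. -/
def HullClosed {V : Type u} (G : SimpleGraph V) (τ : V → ℤ) (H : Set V) : Prop :=
  ∀ u : V, (τ u ≤ ((G.neighborSet u ∩ H).ncard : ℤ)) → u ∈ H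

/-- The hull `H_{(G,τ)}(D)`: smallest superset of `D` closed under the activation rule. -/
def hull {V : Type u} (G : SimpleGraph V) (τ : V → ℤ) (D : Set V) : Set V :=
  ⋂₀ {H : Set V | D ⊆ H ∧ HullClosed G τ H}

/-- `D` is a dynamic monopoly (target set) of `(G,τ)`. -/
def IsDynMonopoly {V : Type u} (G : SimpleGraph V) (τ : V → ℤ) (D : Set V) : Prop :=
  hull G τ D = Set.univ

/-- `dyn(G,τ)`: minimum order of a dynamic monopoly. -/
noncomputable def dynNum {V : Type u} (G : SimpleGraph V) (τ : V → ℤ) : ℕ :=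
  sInf {k | ∃ D : Set V, IsDynMonopoly G τ D ∧ D.ncard = k}

/-- `σ` is a partial incentive of `(G,τ)`. -/
def IsPartialIncentive {V : Type u} (G : SimpleGraph V) (τ : V → ℤ) (σ : V → ℕ) : Prop :=
  hull G (fun u => τ u - σ u) ∅ = Set.univ

/-- `pi(G,τ)`: minimum weight of a partial incentive. -/
noncomputable def piNum {V : Type u} [Fintype V] (G : SimpleGraph V) (τ : V → ℤ) : ℕ :=
  sInf {k | ∃ σ : V → ℕ, IsPartialIncentive G τ σ ∧ ∑ u, σ u = k}

/-- `I` is a `κ`-degenerate set in `G`: there is a linear order of `I` in which every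
vertex has at most `κ u` neighbors among its predecessors. -/
def Degenerate {V : Type u} (G : SimpleGraph V) (κ : V → ℤ) (I : Set V) : Prop :=
  ∃ l : List V, l.Nodup ∧ {v | v ∈ l} = I ∧
    ∀ i : Fin l.length,
      ((G.neighborSet (l.get i) ∩ {w | w ∈ l.take (i : ℕ)}).ncard : ℤ) ≤ κ (l.get i)

/-- The graph `G'` of Lemma 1: for every edge `uv` of `G` add an independent set of
`n` new vertices adjacent exactly to `u` and `v`. -/
def lemma1Graph {V : Type u} (G : SimpleGraph V) (n : ℕ) :
    SimpleGraph (V ⊕ (G.edgeSet × Fin n)) :=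
  SimpleGraph.fromRel (fun x y =>
    match x, y with
    | Sum.inl a, Sum.inl b => G.Adj a b
    | Sum.inl a, Sum.inr e => a ∈ (e.1.1 : Sym2 V)
    | _, _ => False)

/-- The graph `G'` of Lemma 2: to every vertex `u` with `τ u > 0` attach a path `P_u`
of order `τ u`, joining `u` to all vertices of `P_u`. -/
def attachPaths {V : Type u} (G : SimpleGraph V) (τ : V → ℤ) :
    SimpleGraph (V ⊕ (Σ u : V, Fin (τ u).toNat)) :=
  SimpleGraph.fromRel (fun x y =>
    match x, y with
    | Sum.inl a, Sum.inl b => G.Adj a b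
    | Sum.inl a, Sum.inr s => a = s.1
    | Sum.inr s, Sum.inr t => s.1 = t.1 ∧ (s.2 : ℕ) + 1 = (t.2 : ℕ)
    | _, _ => False)

/-- `G` contains `H` as a minor. -/
def HasMinor {V : Type u} {W : Type} (G : SimpleGraph V) (H : SimpleGraph W) : Prop :=
  ∃ φ : W → Set V,
    (∀ w, (φ w).Nonempty) ∧
    (∀ w, (G.induce (φ w)).Connected) ∧
    (Pairwise fun w w' => Disjoint (φ w) (φ w')) ∧
    ∀ w w', H.Adj w w' → ∃ a ∈ φ w, ∃ b ∈ φ w', G.Adj a b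

/-- Planarity, via Wagner's theorem: no `K₅` minor and no `K_{3,3}` minor. -/
def IsPlanar {V : Type u} (G : SimpleGraph V) : Prop :=
  ¬ HasMinor G (completeGraph (Fin 5)) ∧
  ¬ HasMinor G (completeBipartiteGraph (Fin 3) (Fin 3))

/-- Chordality: every cycle of length at least four has a chord. -/
def IsChordal {V : Type u} (G : SimpleGraph V) : Prop :=
  ∀ ⦃v : V⦄ (c : G.Walk v v), c.IsCycle → 4 ≤ c.length →
    ∃ u w, u ∈ c.support ∧ w ∈ c.support ∧ G.Adj u w ∧ s(u, w) ∉ c.edges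

/-- `t`-connectedness: more than `t` vertices, and removing fewer than `t` vertices
leaves the graph connected. -/
def TConnected {V : Type u} [Fintype V] (G : SimpleGraph V) (t : ℕ) : Prop :=
  t < Fintype.card V ∧ ∀ S : Set V, S.ncard < t → (G.induce (Sᶜ)).Connected

/-- Outside neighbors `N⁺(A)` of `A`. -/
def Nplus {V : Type u} (G : SimpleGraph V) (A : Set V) : Set V :=
  {v | v ∉ A ∧ ∃ u ∈ A, G.Adj u v}

/-- Boundary `N⁻(B) = N⁺(V ∖ B)` of `B`. -/
def Nminus {V : Type u} (G : SimpleGraph V) (B : Set V) : Set V :=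
  Nplus G Bᶜ

/-- `B` is an `A`-strong region. -/
def StrongRegion {V : Type u} (G : SimpleGraph V) (τ : V → ℤ) (A B : Set V) : Prop :=
  ¬ B ⊆ hull G τ (A ∪ Nplus G B)

/-- `G` has a tree-decomposition of width at most `w`. -/
def HasTreeDecompOfWidthLE {V : Type u} (G : SimpleGraph V) (w : ℕ) : Prop :=
  ∃ (ι : Type) (T : SimpleGraph ι) (bag : ι → Set V),
    T.IsTree ∧
    (∀ v, ∃ t, v ∈ bag t) ∧
    (∀ u v, G.Adj u v → ∃ t, u ∈ bag t ∧ v ∈ bag t) ∧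
    (∀ v, (T.induce {t | v ∈ bag t}).Connected) ∧
    (∀ t, (bag t).ncard ≤ w + 1)


/-!
Peel off one vertex at a time. Since `deg v = τ v + κ v`, a vertex `v ∈ I` has at most `κ v`
neighbours in `I \ {v}` exactly when it has at least `τ v` neighbours in `Iᶜ`: it may come last
in a `κ`-ordering of `I` iff `Iᶜ` activates it. If `I` is `κ`-degenerate, its last vertex `v`
is activated by `Iᶜ`, so `hull (Iᶜ) ⊇ hull (Iᶜ ∪ {v})`, which is everything by induction.
Conversely, if `Iᶜ` is a dynamic monopoly, `Iᶜ` is not closed unless `I = ∅`, so it activates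
some `v ∈ I`; then `Iᶜ ∪ {v}` is a dynamic monopoly too, `I \ {v}` is `κ`-degenerate by
induction, and `v` can be appended to its ordering.
-/

lemma forall_fin_length_append_singleton {α : Type*} (l : List α) (v : α)
    (P : α → List α → Prop) :
    (∀ i : Fin (l ++ [v]).length, P ((l ++ [v]).get i) ((l ++ [v]).take i)) ↔
      (∀ i : Fin l.length, P (l.get i) (l.take i)) ∧ P v l := by
  simp only [Fin.forall_iff, List.get_eq_getElem, List.length_append, List.length_singleton]
  constructor
  · intro h
    refine ⟨fun i hi => ?_, ?_⟩
    · simpa [List.getElem_append_left hi, List.take_append_of_le_length hi.le] using h i (by omega)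
    · simpa using h l.length (by omega)
  · intro ⟨hl, hv⟩ i hi
    rcases Nat.lt_succ_iff_lt_or_eq.1 hi with hi | rfl
    · simpa [List.getElem_append_left hi, List.take_append_of_le_length hi.le] using hl i hi
    · simpa using hv

namespace SimpleGraph

variable {V : Type u} {G : SimpleGraph V} {τ κ : V → ℤ} {D D' I : Set V} {v : V}

lemma subset_hull (D : Set V) : D ⊆ hull G τ D :=
  fun _ hv => Set.mem_sInter.2 fun _ hH => hH.1 hv

lemma hull_subset {H : Set V} (hD : D ⊆ H) (hH : HullClosed G τ H) : hull G τ D ⊆ H :=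
  Set.sInter_subset_of_mem ⟨hD, hH⟩

lemma hull_mono (h : D ⊆ D') : hull G τ D ⊆ hull G τ D' :=
  fun _ hv => Set.mem_sInter.2 fun H hH => Set.mem_sInter.1 hv H ⟨h.trans hH.1, hH.2⟩

lemma isDynMonopoly_univ : IsDynMonopoly G τ Set.univ :=
  Set.eq_univ_of_univ_subset (subset_hull _)

lemma IsDynMonopoly.mono (hD : IsDynMonopoly G τ D) (h : D ⊆ D') : IsDynMonopoly G τ D' :=
  Set.eq_univ_of_univ_subset (hD ▸ hull_mono h)

lemma IsDynMonopoly.exists_activated_of_compl (hI : IsDynMonopoly G τ Iᶜ) (hne : I.Nonempty) :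
    ∃ v ∈ I, τ v ≤ ((G.neighborSet v ∩ Iᶜ).ncard : ℤ) := by
  by_contra! hlt
  have hclosed : HullClosed G τ Iᶜ := fun u hu huI => (hlt u huI).not_ge hu
  obtain ⟨w, hw⟩ := hne
  exact hull_subset subset_rfl hclosed (hI ▸ Set.mem_univ w) hw

section LocallyFinite

variable [G.LocallyFinite]

lemma ncard_neighborSet_inter_mono {S T : Set V} (h : S ⊆ T) (v : V) :
    (G.neighborSet v ∩ S).ncard ≤ (G.neighborSet v ∩ T).ncard :=
  Set.ncard_le_ncard (Set.inter_subset_inter_right _ h)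
    ((G.neighborSet v).toFinite.inter_of_left T)

lemma hullClosed_hull (D : Set V) : HullClosed G τ (hull G τ D) :=
  fun u hu => Set.mem_sInter.2 fun _ hH =>
    hH.2 u (hu.trans (mod_cast ncard_neighborSet_inter_mono (hull_subset hH.1 hH.2) u))

lemma IsDynMonopoly.of_insert (hD : IsDynMonopoly G τ (insert v D))
    (hv : τ v ≤ ((G.neighborSet v ∩ D).ncard : ℤ)) : IsDynMonopoly G τ D := by
  have hvD : v ∈ hull G τ D :=
    hullClosed_hull D v (hv.trans (mod_cast ncard_neighborSet_inter_mono (subset_hull D) v))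
  exact Set.eq_univ_of_univ_subset
    (hD ▸ hull_subset (Set.insert_subset hvD (subset_hull D)) (hullClosed_hull D))

end LocallyFinite

lemma degenerate_empty : Degenerate G κ ∅ :=
  ⟨[], List.nodup_nil, by simp, fun i => i.elim0⟩

lemma degenerate_append_singleton_iff {l : List V} :
    (∀ i : Fin (l ++ [v]).length, ((G.neighborSet ((l ++ [v]).get i) ∩
        {w | w ∈ (l ++ [v]).take i}).ncard : ℤ) ≤ κ ((l ++ [v]).get i)) ↔
      (∀ i : Fin l.length,
        ((G.neighborSet (l.get i) ∩ {w | w ∈ l.take i}).ncard : ℤ) ≤ κ (l.get i)) ∧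
      ((G.neighborSet v ∩ {w | w ∈ l}).ncard : ℤ) ≤ κ v :=
  forall_fin_length_append_singleton l v fun u l' =>
    ((G.neighborSet u ∩ {w | w ∈ l'}).ncard : ℤ) ≤ κ u

lemma Degenerate.insert (hI : Degenerate G κ I) (hv : v ∉ I)
    (hκ : ((G.neighborSet v ∩ I).ncard : ℤ) ≤ κ v) : Degenerate G κ (insert v I) := by
  obtain ⟨l, hnd, rfl, hl⟩ := hI
  refine ⟨l ++ [v], ?_, ?_, degenerate_append_singleton_iff.2 ⟨hl, hκ⟩⟩
  · exact hnd.append (List.nodup_singleton v) (List.disjoint_singleton.2 hv)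
  · ext w
    simp [or_comm]

lemma Degenerate.exists_last (hI : Degenerate G κ I) (hne : I.Nonempty) :
    ∃ v ∈ I, Degenerate G κ (I \ {v}) ∧ ((G.neighborSet v ∩ (I \ {v})).ncard : ℤ) ≤ κ v := by
  obtain ⟨l, hnd, rfl, hl⟩ := hI
  obtain rfl | ⟨l, v, rfl⟩ := l.eq_nil_or_concat'
  · simp at hne
  obtain ⟨hl, hκ⟩ := degenerate_append_singleton_iff.1 hl
  have hvl : v ∉ l := (List.nodup_cons.1 (List.nodup_append_comm.1 hnd)).1
  have hdiff : {w | w ∈ l ++ [v]} \ {v} = {w | w ∈ l} := by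
    ext w
    simp only [List.mem_append, List.mem_singleton, Set.mem_sdiff, Set.mem_ofPred_eq,
      Set.mem_singleton_iff]
    constructor
    · rintro ⟨hw | hw, hwv⟩ <;> tauto
    · exact fun hw => ⟨Or.inl hw, by rintro rfl; exact hvl hw⟩
  exact ⟨v, by simp, hdiff ▸ ⟨l, (List.nodup_append.1 hnd).1, rfl, hl⟩, hdiff ▸ hκ⟩

lemma ncard_neighborSet_inter_sdiff_singleton_le_iff [Fintype (G.neighborSet v)]
    (hdeg : (G.degree v : ℤ) = τ v + κ v) :
    ((G.neighborSet v ∩ (I \ {v})).ncard : ℤ) ≤ κ v ↔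
      τ v ≤ ((G.neighborSet v ∩ Iᶜ).ncard : ℤ) := by
  have hsplit : (G.neighborSet v ∩ I).ncard + (G.neighborSet v ∩ Iᶜ).ncard = G.degree v := by
    rw [← Set.sdiff_eq, Set.ncard_inter_add_ncard_sdiff_eq_ncard _ _ (Set.toFinite _),
      Set.ncard_eq_toFinset_card', Set.toFinset_card, card_neighborSet_eq_degree]
  rw [← Set.inter_sdiff_assoc, Set.sdiff_singleton_eq_self fun h => G.irrefl h.1]
  omega

end SimpleGraph

theorem stmt_0_general {V : Type} [Fintype V] (G : SimpleGraph V)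
    [DecidableRel G.Adj] (κ τ : V → ℤ)
    (h : ∀ u : V, (G.degree u : ℤ) = τ u + κ u) (I : Set V) :
    Degenerate G κ I ↔ IsDynMonopoly G τ (Iᶜ) := by
  induction hn : I.ncard generalizing I with
  | zero =>
    obtain rfl : I = ∅ := (Set.ncard_eq_zero (Set.toFinite I)).1 hn
    exact iff_of_true degenerate_empty (Set.compl_empty ▸ isDynMonopoly_univ)
  | succ n ih =>
    have hne : I.Nonempty := Set.nonempty_of_ncard_ne_zero (by omega)
    have hpeel : ∀ v ∈ I, (Degenerate G κ (I \ {v}) ↔ IsDynMonopoly G τ (insert v Iᶜ)) :=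
      fun v hv => by
        rw [← Set.singleton_union, ← Set.compl_sdiff]
        exact ih _ (by rw [Set.ncard_sdiff_singleton_of_mem hv, hn]; rfl)
    constructor
    · intro hI
      obtain ⟨v, hv, hdeg, hκ⟩ := hI.exists_last hne
      exact ((hpeel v hv).1 hdeg).of_insert
        ((ncard_neighborSet_inter_sdiff_singleton_le_iff (h v)).1 hκ)
    · intro hI
      obtain ⟨v, hv, hτ⟩ := hI.exists_activated_of_compl hne
      have hdeg := ((hpeel v hv).2 (hI.mono (Set.subset_insert v _))).insert (by simp)
        ((ncard_neighborSet_inter_sdiff_singleton_le_iff (h v)).2 hτ)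
      rwa [Set.insert_sdiff_singleton, Set.insert_eq_of_mem hv] at hdeg

/-- duality between κ-degenerate sets and dynamic monopolies. -/
theorem stmt_0 {V : Type} [Fintype V] [DecidableEq V] (G : SimpleGraph V)
    [DecidableRel G.Adj] (κ τ : V → ℤ)
    (h : ∀ u : V, (G.degree u : ℤ) = τ u + κ u) (I : Set V) :
    Degenerate G κ I ↔ IsDynMonopoly G τ (Iᶜ) :=
  stmt_0_general G κ τ h I
end

section
/- Let G be a graph and τ a threshold function for G. Let G' arise from G by adding, for every vertex u of G with τ(u) > 0, a path P_u of order τ(u) together with all edges between u and the vertices of P_u. Define τ'(u) = τ(u) for u ∈ V(G) and τ'(v) = 1 for every new vertex v. Then dyn(G, τ) = pi(G', τ'). -/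
open SimpleGraph

universe u

section AuxLemmas

variable {V : Type u}

lemma subset_hull (G : SimpleGraph V) (τ : V → ℤ) (D : Set V) : D ⊆ hull G τ D :=
  Set.subset_sInter fun _ h => h.1

lemma hull_subset_of_closed {G : SimpleGraph V} {τ : V → ℤ} {D H : Set V}
    (hD : D ⊆ H) (hH : HullClosed G τ H) : hull G τ D ⊆ H :=
  Set.sInter_subset_of_mem ⟨hD, hH⟩

lemma hullClosed_hull [Finite V] (G : SimpleGraph V) (τ : V → ℤ) (D : Set V) :
    HullClosed G τ (hull G τ D) := by
  intro u hu
  rw [hull, Set.mem_sInter]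
  intro H hH
  refine hH.2 u (le_trans hu ?_)
  exact_mod_cast Set.ncard_le_ncard
    (Set.inter_subset_inter_right _ (Set.sInter_subset_of_mem hH)) (Set.toFinite _)

lemma adj_inl_inl {G : SimpleGraph V} {τ : V → ℤ} {a b : V} :
    (attachPaths G τ).Adj (Sum.inl a) (Sum.inl b) ↔ G.Adj a b := by
  constructor
  · rintro ⟨hne, h | h⟩
    · exact h
    · exact h.symm
  · intro h
    exact ⟨by simpa using h.ne, Or.inl h⟩

lemma adj_inl_inr {G : SimpleGraph V} {τ : V → ℤ} {a : V} {p : Σ u : V, Fin (τ u).toNat} :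
    (attachPaths G τ).Adj (Sum.inl a) (Sum.inr p) ↔ a = p.1 := by
  constructor
  · rintro ⟨hne, h | h⟩
    · exact h
    · exact h.elim
  · intro h
    exact ⟨Sum.inl_ne_inr, Or.inl h⟩

lemma adj_inr_cases {G : SimpleGraph V} {τ : V → ℤ} {p : Σ u : V, Fin (τ u).toNat}
    {x : V ⊕ (Σ u : V, Fin (τ u).toNat)} (h : (attachPaths G τ).Adj (Sum.inr p) x) :
    x = Sum.inl p.1 ∨ ∃ q, x = Sum.inr q ∧ q.1 = p.1 := by
  obtain ⟨hne, hrel⟩ := h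
  cases x with
  | inl b =>
    left
    rcases hrel with h | h
    · exact h.elim
    · rw [h]
  | inr q =>
    right
    rcases hrel with ⟨h, -⟩ | ⟨h, -⟩
    · exact ⟨q, rfl, h.symm⟩
    · exact ⟨q, rfl, h⟩

lemma adj_inr_succ {G : SimpleGraph V} {τ : V → ℤ} {u : V} {i j : Fin (τ u).toNat}
    (h : (i : ℕ) + 1 = (j : ℕ)) :
    (attachPaths G τ).Adj (Sum.inr ⟨u, i⟩) (Sum.inr ⟨u, j⟩) := by
  refine ⟨?_, Or.inl ⟨rfl, h⟩⟩
  intro hc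
  have : i = j := by simpa using hc
  rw [this] at h
  omega

end AuxLemmas
section Main

variable {V : Type} [Fintype V] (G : SimpleGraph V) (τ : V → ℤ)

/-- Every pair has a trivial dynamic monopoly. -/
lemma isDynMonopoly_univ : IsDynMonopoly G τ Set.univ :=
  Set.eq_univ_of_univ_subset (subset_hull G τ Set.univ)

/-- Every pair has some partial incentive. -/
lemma isPartialIncentive_toNat : IsPartialIncentive G τ (fun u => (τ u).toNat) := by
  apply Set.eq_univ_of_univ_subset
  intro x _
  rw [hull, Set.mem_sInter]
  intro H hH
  have h : τ x - (((τ x).toNat : ℕ) : ℤ) ≤ 0 := by omega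
  exact hH.2 x (le_trans h (Int.ofNat_nonneg _))

/-- Direction `piNum ≤` : from a dynamic monopoly of `(G, τ)` construct a partial
incentive of the attached-paths pair of no larger weight. -/
lemma partial_incentive_of_dyn (D : Set V) (hD : IsDynMonopoly G τ D) :
    ∃ σ : V ⊕ (Σ u : V, Fin (τ u).toNat) → ℕ,
      IsPartialIncentive (attachPaths G τ) (Sum.elim τ (fun _ => 1)) σ ∧
      ∑ u, σ u ≤ D.ncard := by
  classical
  set G' := attachPaths G τ with hG'
  set σ : V ⊕ (Σ u : V, Fin (τ u).toNat) → ℕ :=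
    Sum.elim (fun _ => 0) (fun p => if p.1 ∈ D ∧ (p.2 : ℕ) = 0 then 1 else 0) with hσ
  set τσ : V ⊕ (Σ u : V, Fin (τ u).toNat) → ℤ :=
    fun x => Sum.elim τ (fun _ => 1) x - σ x with hτσ
  set K := hull G' τσ ∅ with hK
  have hKc : HullClosed G' τσ K := hullClosed_hull G' τσ ∅
  -- Step 2 : all path vertices of monopoly vertices enter the hull
  have step2 : ∀ u ∈ D, ∀ (m : ℕ) (h : m < (τ u).toNat),
      (Sum.inr ⟨u, ⟨m, h⟩⟩ : V ⊕ (Σ u : V, Fin (τ u).toNat)) ∈ K := by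
    intro u hu m
    induction m with
    | zero =>
      intro h
      apply hKc
      have hσ1 : σ (Sum.inr ⟨u, ⟨0, h⟩⟩) = 1 := by simp [hσ, hu]
      have : τσ (Sum.inr ⟨u, ⟨0, h⟩⟩) = 0 := by simp [hτσ, hσ1]
      rw [this]
      exact Int.ofNat_nonneg _
    | succ m ih =>
      intro h
      have hm : m < (τ u).toNat := Nat.lt_of_succ_lt h
      apply hKc
      have hadj : G'.Adj (Sum.inr ⟨u, ⟨m + 1, h⟩⟩) (Sum.inr ⟨u, ⟨m, hm⟩⟩) :=
        (adj_inr_succ rfl).symm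
      have hne : (G'.neighborSet (Sum.inr ⟨u, ⟨m + 1, h⟩⟩) ∩ K).Nonempty :=
        ⟨Sum.inr ⟨u, ⟨m, hm⟩⟩, hadj, ih hm⟩
      have h1 : 1 ≤ (G'.neighborSet (Sum.inr ⟨u, ⟨m + 1, h⟩⟩) ∩ K).ncard :=
        (Set.ncard_pos (Set.toFinite _)).mpr hne
      have hσ0 : σ (Sum.inr ⟨u, ⟨m + 1, h⟩⟩) = 0 := by simp [hσ]
      have : τσ (Sum.inr ⟨u, ⟨m + 1, h⟩⟩) = 1 := by simp [hτσ, hσ0]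
      rw [this]
      exact_mod_cast h1
  -- Step 3 : monopoly vertices enter the hull
  have step3 : ∀ u ∈ D, (Sum.inl u : V ⊕ (Σ u : V, Fin (τ u).toNat)) ∈ K := by
    intro u hu
    apply hKc
    have hτσu : τσ (Sum.inl u) = τ u := by simp [hτσ, hσ]
    rw [hτσu]
    by_cases hτu : τ u ≤ 0
    · exact le_trans hτu (Int.ofNat_nonneg _)
    · push_neg at hτu
      have hsub : (fun i : Fin (τ u).toNat =>
          (Sum.inr ⟨u, i⟩ : V ⊕ (Σ u : V, Fin (τ u).toNat))) '' Set.univ ⊆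
          G'.neighborSet (Sum.inl u) ∩ K := by
        rintro x ⟨i, -, rfl⟩
        exact ⟨(adj_inl_inr (G := G)).mpr rfl, step2 u hu i.1 i.2⟩
      have hinj : Function.Injective (fun i : Fin (τ u).toNat =>
          (Sum.inr ⟨u, i⟩ : V ⊕ (Σ u : V, Fin (τ u).toNat))) := by
        intro i j hij
        simpa using hij
      have hcard : (τ u).toNat ≤ (G'.neighborSet (Sum.inl u) ∩ K).ncard := by
        have := Set.ncard_le_ncard hsub (Set.toFinite _)
        rwa [Set.ncard_image_of_injective _ hinj, Set.ncard_univ, Nat.card_eq_fintype_card,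
          Fintype.card_fin] at this
      calc τ u = ((τ u).toNat : ℤ) := by omega
        _ ≤ _ := by exact_mod_cast hcard
  -- Step 4 : all original vertices enter the hull
  have step4 : ∀ w : V, (Sum.inl w : V ⊕ (Σ u : V, Fin (τ u).toNat)) ∈ K := by
    have hclosed : HullClosed G τ {w : V | (Sum.inl w : V ⊕ (Σ u : V, Fin (τ u).toNat)) ∈ K} := by
      intro w hw
      apply hKc
      have hτσw : τσ (Sum.inl w) = τ w := by simp [hτσ, hσ]
      rw [hτσw]
      refine le_trans hw ?_
      have hsub : Sum.inl '' (G.neighborSet w ∩ {w : V | (Sum.inl w : V ⊕ (Σ u : V, Fin (τ u).toNat)) ∈ K}) ⊆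
          G'.neighborSet (Sum.inl w) ∩ K := by
        rintro x ⟨b, ⟨hb, hbK⟩, rfl⟩
        exact ⟨(adj_inl_inl (G := G)).mpr hb, hbK⟩
      have := Set.ncard_le_ncard hsub (Set.toFinite _)
      rw [Set.ncard_image_of_injective _ Sum.inl_injective] at this
      exact_mod_cast this
    intro w
    have : hull G τ D ⊆ {w : V | (Sum.inl w : V ⊕ (Σ u : V, Fin (τ u).toNat)) ∈ K} :=
      hull_subset_of_closed step3 hclosed
    exact this (hD ▸ Set.mem_univ w)
  -- Step 5 : all path vertices enter the hull
  have step5 : ∀ p : Σ u : V, Fin (τ u).toNat,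
      (Sum.inr p : V ⊕ (Σ u : V, Fin (τ u).toNat)) ∈ K := by
    intro p
    apply hKc
    have hadj : G'.Adj (Sum.inr p) (Sum.inl p.1) := ((adj_inl_inr (G := G)).mpr rfl).symm
    have h1 : 1 ≤ (G'.neighborSet (Sum.inr p) ∩ K).ncard :=
      (Set.ncard_pos (Set.toFinite _)).mpr ⟨Sum.inl p.1, hadj, step4 p.1⟩
    have : τσ (Sum.inr p) ≤ 1 := by
      simp only [hτσ, Sum.elim_inr]
      omega
    refine le_trans this ?_
    exact_mod_cast h1
  refine ⟨σ, ?_, ?_⟩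
  · apply Set.eq_univ_of_forall
    rintro (w | p)
    · exact step4 w
    · exact step5 p
  · -- weight bound
    rw [Fintype.sum_sum_type]
    simp only [hσ, Sum.elim_inl, Sum.elim_inr, Finset.sum_const_zero, zero_add]
    rw [← Finset.univ_sigma_univ, Finset.sum_sigma]
    have hle : ∀ u : V,
        (∑ i : Fin (τ u).toNat, if u ∈ D ∧ (i : ℕ) = 0 then 1 else 0) ≤
        (if u ∈ D then 1 else 0 : ℕ) := by
      intro u
      by_cases hu : u ∈ D
      · simp only [hu, true_and, if_true]
        rw [← Finset.card_filter]
        apply Finset.card_le_one.mpr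
        intro a ha b hb
        simp only [Finset.mem_filter] at ha hb
        exact Fin.ext (ha.2.trans hb.2.symm)
      · simp [hu]
    calc (∑ u : V, ∑ i : Fin (τ u).toNat, if u ∈ D ∧ (i : ℕ) = 0 then 1 else 0)
        ≤ ∑ u : V, (if u ∈ D then 1 else 0 : ℕ) := Finset.sum_le_sum fun u _ => hle u
      _ = (Finset.univ.filter (· ∈ D)).card := by rw [Finset.card_filter]
      _ = D.ncard := by rw [Set.ncard_eq_toFinset_card']; congr 1; ext; simp

/-- Direction `dynNum ≤` : from a partial incentive of the attached-paths pair
construct a dynamic monopoly of `(G, τ)` of no larger order. -/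
lemma dyn_of_partial_incentive (σ : V ⊕ (Σ u : V, Fin (τ u).toNat) → ℕ)
    (hσ : IsPartialIncentive (attachPaths G τ) (Sum.elim τ (fun _ => 1)) σ) :
    ∃ D : Set V, IsDynMonopoly G τ D ∧ D.ncard ≤ ∑ u, σ u := by
  classical
  set G' := attachPaths G τ with hG'
  set grp : V ⊕ (Σ u : V, Fin (τ u).toNat) → V := Sum.elim id Sigma.fst with hgrp
  set D : Set V := {u : V | ∃ x, grp x = u ∧ 0 < σ x} with hD
  set H := hull G τ D with hH
  have hHc : HullClosed G τ H := hullClosed_hull G τ D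
  have hDH : D ⊆ H := subset_hull G τ D
  -- closedness of the lifted set
  have hclosed : HullClosed G' (fun x => Sum.elim τ (fun _ => 1) x - σ x)
      {x : V ⊕ (Σ u : V, Fin (τ u).toNat) | grp x ∈ H} := by
    rintro (u | p) hx
    · show u ∈ H
      by_cases hu : u ∈ H
      · exact hu
      · have hσu : σ (Sum.inl u) = 0 := by
          by_contra hc
          exact hu (hDH ⟨Sum.inl u, rfl, Nat.pos_of_ne_zero hc⟩)
        have hsub : G'.neighborSet (Sum.inl u) ∩
            {x : V ⊕ (Σ u : V, Fin (τ u).toNat) | grp x ∈ H} ⊆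
            Sum.inl '' (G.neighborSet u ∩ H) := by
          rintro (b | q) ⟨hadj, hx'⟩
          · exact ⟨b, ⟨(adj_inl_inl (G := G)).mp hadj, hx'⟩, rfl⟩
          · exfalso
            have huq : u = q.1 := (adj_inl_inr (G := G)).mp hadj
            exact hu (huq ▸ hx')
        have hcard : (G'.neighborSet (Sum.inl u) ∩
            {x : V ⊕ (Σ u : V, Fin (τ u).toNat) | grp x ∈ H}).ncard ≤
            (G.neighborSet u ∩ H).ncard := by
          refine le_trans (Set.ncard_le_ncard hsub (Set.toFinite _)) ?_
          rw [Set.ncard_image_of_injective _ Sum.inl_injective]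
        apply hHc
        simp only [Sum.elim_inl, hσu, Nat.cast_zero, sub_zero] at hx
        exact le_trans hx (by exact_mod_cast hcard)
    · show p.1 ∈ H
      by_cases hp : 0 < σ (Sum.inr p)
      · exact hDH ⟨Sum.inr p, rfl, hp⟩
      · have hσ0 : σ (Sum.inr p) = 0 := Nat.eq_zero_of_not_pos hp
        have h1 : (1 : ℤ) ≤ ((G'.neighborSet (Sum.inr p) ∩
            {x : V ⊕ (Σ u : V, Fin (τ u).toNat) | grp x ∈ H}).ncard : ℤ) := by
          simpa [Sum.elim_inr, hσ0] using hx
        have h2 : (G'.neighborSet (Sum.inr p) ∩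
            {x : V ⊕ (Σ u : V, Fin (τ u).toNat) | grp x ∈ H}).ncard ≠ 0 := by
          exact_mod_cast Nat.one_le_iff_ne_zero.mp (by exact_mod_cast h1)
        obtain ⟨x, hadj, hx'⟩ := Set.nonempty_of_ncard_ne_zero h2
        rcases adj_inr_cases hadj with rfl | ⟨q, rfl, hq⟩
        · exact hx'
        · exact hq ▸ hx'
  have hmono : IsDynMonopoly G τ D := by
    have : Set.univ ⊆ {x : V ⊕ (Σ u : V, Fin (τ u).toNat) | grp x ∈ H} :=
      hσ ▸ hull_subset_of_closed (Set.empty_subset _) hclosed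
    apply Set.eq_univ_of_forall
    intro w
    exact this (Set.mem_univ (Sum.inl w))
  -- counting
  set f : V → V ⊕ (Σ u : V, Fin (τ u).toNat) :=
    fun u => if h : ∃ x, grp x = u ∧ 0 < σ x then h.choose else Sum.inl u with hf
  have hfspec : ∀ u ∈ D, grp (f u) = u ∧ 0 < σ (f u) := by
    intro u hu
    simp only [hf]
    rw [dif_pos (show ∃ x, grp x = u ∧ 0 < σ x from hu)]
    exact hu.choose_spec
  have hinj : Set.InjOn f D := by
    intro a ha b hb hab
    rw [← (hfspec a ha).1, ← (hfspec b hb).1, hab]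
  have hcount : D.ncard ≤ ∑ x, σ x := by
    rw [← Set.ncard_image_of_injOn hinj]
    rw [Set.ncard_eq_toFinset_card (f '' D) (Set.toFinite _)]
    have h1 : ∀ x ∈ (Set.toFinite (f '' D)).toFinset, 1 ≤ σ x := by
      intro x hxm
      rw [Set.Finite.mem_toFinset] at hxm
      obtain ⟨u, hu, rfl⟩ := hxm
      exact (hfspec u hu).2
    have h2 : (Set.toFinite (f '' D)).toFinset.card ≤
        ∑ x ∈ (Set.toFinite (f '' D)).toFinset, σ x := by
      simpa using Finset.card_nsmul_le_sum _ σ 1 h1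
    exact le_trans h2 (Finset.sum_le_sum_of_subset (Finset.subset_univ _))
  exact ⟨D, hmono, hcount⟩

end Main

/-- `dyn(G,τ) = pi(G',τ')` for the path-attachment construction. -/
theorem stmt_3 {V : Type} [Fintype V] (G : SimpleGraph V) (τ : V → ℤ) :
    dynNum G τ = piNum (attachPaths G τ) (Sum.elim τ (fun _ => 1)) := by
  apply le_antisymm
  · have hne : {k | ∃ σ : V ⊕ (Σ u : V, Fin (τ u).toNat) → ℕ,
        IsPartialIncentive (attachPaths G τ) (Sum.elim τ (fun _ => 1)) σ ∧
        ∑ u, σ u = k}.Nonempty :=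
      ⟨_, _, isPartialIncentive_toNat _ _, rfl⟩
    obtain ⟨σ, hσ, hk⟩ := Nat.sInf_mem hne
    obtain ⟨D, hDm, hDc⟩ := dyn_of_partial_incentive G τ σ hσ
    calc dynNum G τ ≤ D.ncard := Nat.sInf_le ⟨D, hDm, rfl⟩
      _ ≤ ∑ u, σ u := hDc
      _ = piNum (attachPaths G τ) (Sum.elim τ (fun _ => 1)) := hk
  · have hne : {k | ∃ D : Set V, IsDynMonopoly G τ D ∧ D.ncard = k}.Nonempty :=
      ⟨_, _, isDynMonopoly_univ G τ, rfl⟩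
    obtain ⟨D, hD, hk⟩ := Nat.sInf_mem hne
    obtain ⟨σ, hσ, hσc⟩ := partial_incentive_of_dyn G τ D hD
    calc piNum (attachPaths G τ) (Sum.elim τ (fun _ => 1)) ≤ ∑ u, σ u :=
        Nat.sInf_le ⟨σ, hσ, rfl⟩
      _ ≤ D.ncard := hσc
      _ = dynNum G τ := hk
end

section
/- Let G be a graph with threshold function τ, and let G' arise from G by attaching to every vertex u with τ(u) > 0 a path P_u of order τ(u), joining u to all vertices of P_u. If G has treewidth w, then G' has treewidth at most max{w, 2}. -/
/-!
Let `(T, bag)` be a tree decomposition of `G`, write `P_u = p_{u,0} ⋯ p_{u,τ u - 1}`, and pick a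
node `f u` whose bag contains `u`. Below `f u` hang a path of new nodes `⟨u, 0⟩, …, ⟨u, τ u - 1⟩`,
the node `⟨u, i⟩` carrying the bag `{u, p_{u,i-1}, p_{u,i}}`. Each new node hangs from a parent of
smaller height, so the index graph is still a tree; the nodes whose bags contain `p_{u,i}` are
`⟨u, i⟩` and `⟨u, i+1⟩`, those whose bags contain `u` are the old ones plus the path below `f u`,
and the new bags have at most three elements.
-/

open SimpleGraph

universe u

namespace SimpleGraph

variable {X Y : Type*} {H : SimpleGraph X}

lemma Connected.induce_image {G : SimpleGraph Y} (φ : G →g H) {s : Set Y}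
    (h : (G.induce s).Connected) : (H.induce (φ '' s)).Connected :=
  h.map (induceHom φ (Set.mapsTo_image φ s)) (Set.surjective_mapsTo_image_restrict φ s)

lemma induce_connected_of_descent {s S : Set X} (hSs : S ⊆ s) (hS : (H.induce S).Connected)
    (r : X → ℕ) (hr : ∀ x ∈ s, x ∉ S → ∃ y ∈ s, H.Adj x y ∧ r y < r x) :
    (H.induce s).Connected := by
  obtain ⟨c, hc⟩ := hS.nonempty
  rw [connected_iff_exists_forall_reachable]
  refine ⟨⟨c, hSs hc⟩, fun ⟨x, hx⟩ => ?_⟩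
  induction hn : r x using Nat.strong_induction_on generalizing x with
  | _ n ih =>
  by_cases hxS : x ∈ S
  · exact (hS.preconnected ⟨c, hc⟩ ⟨x, hxS⟩).map (H.induceHomOfLE hSs).toHom
  · obtain ⟨y, hy, hxy, hlt⟩ := hr x hx hxS
    have hyx : (H.induce s).Adj ⟨y, hy⟩ ⟨x, hx⟩ := hxy.symm
    exact (ih _ (hn ▸ hlt) y hy rfl).trans hyx.reachable

-- A vertex of maximal rank on a cycle has two distinct cycle-neighbours of no larger rank.
theorem isAcyclic_of_rank (r : X → ℕ) (h0 : (H.induce {x | r x = 0}).IsAcyclic)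
    (hr : ∀ ⦃x y z⦄, 0 < r x → H.Adj x y → H.Adj x z → r y ≤ r x → r z ≤ r x → y = z) :
    H.IsAcyclic := by
  classical
  intro v c hc
  by_cases hzero : ∀ x ∈ c.support, r x = 0
  · refine h0 (c.induce {x | r x = 0} hzero) ?_
    rw [← Walk.isCycle_map_iff_of_injective
      (f := (Embedding.induce (G := H) {x | r x = 0}).toHom)
      (Embedding.induce (G := H) _).injective, Walk.map_induce]
    exact hc
  · push Not at hzero
    obtain ⟨x, hx, hx0⟩ := hzero
    obtain ⟨m, hm, hmax⟩ := c.support.toFinset.exists_max_image r ⟨x, by simpa⟩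
    simp only [List.mem_toFinset] at hm hmax
    obtain ⟨y, z, hyz, hnbr⟩ := Set.ncard_eq_two.mp (hc.ncard_neighborSet_toSubgraph_eq_two hm)
    have hy : c.toSubgraph.Adj m y := by simp [← Subgraph.mem_neighborSet, hnbr]
    have hz : c.toSubgraph.Adj m z := by simp [← Subgraph.mem_neighborSet, hnbr]
    exact hyz (hr (by have := hmax x hx; omega) hy.adj_sub hz.adj_sub
      (hmax y (Walk.mem_support_of_adj_toSubgraph hy.symm))
      (hmax z (Walk.mem_support_of_adj_toSubgraph hz.symm)))

end SimpleGraph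

section Graft

variable {ι κ : Type*} (T : SimpleGraph ι) (parent : κ → ι ⊕ κ)

def graft : SimpleGraph (ι ⊕ κ) :=
  SimpleGraph.fromRel fun x y =>
    match x, y with
    | .inl s, .inl t => T.Adj s t
    | .inr k, y => y = parent k
    | .inl _, .inr _ => False

variable {T parent}

@[simp]
lemma graft_adj_inl_inl {s t : ι} : (graft T parent).Adj (.inl s) (.inl t) ↔ T.Adj s t := by
  simp only [graft, fromRel_adj, ne_eq, Sum.inl.injEq]
  exact ⟨fun h => h.2.elim id (·.symm), fun h => ⟨h.ne, .inl h⟩⟩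

lemma graft_adj_inr {k : κ} {y : ι ⊕ κ} :
    (graft T parent).Adj (.inr k) y ↔
      .inr k ≠ y ∧ (y = parent k ∨ ∃ k', y = .inr k' ∧ parent k' = .inr k) := by
  cases y <;> simp [graft, eq_comm]

variable (T parent) in
def graftInl : T ↪g graft T parent where
  toEmbedding := .inl
  map_rel_iff' := graft_adj_inl_inl

@[simp]
lemma graftInl_apply (s : ι) : graftInl T parent s = .inl s := rfl

def graftDepth (height : κ → ℕ) : ι ⊕ κ → ℕ := Sum.elim 0 (height · + 1)

variable {height : κ → ℕ}

lemma graftDepth_parent_lt (hheight : ∀ k k', parent k = .inr k' → height k' < height k) (k : κ) :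
    graftDepth height (parent k) < graftDepth height (.inr k : ι ⊕ κ) := by
  cases h : parent k with
  | inl => simp [graftDepth]
  | inr k' => simpa [graftDepth] using hheight k k' h

lemma graft_adj_parent (hheight : ∀ k k', parent k = .inr k' → height k' < height k) (k : κ) :
    (graft T parent).Adj (.inr k) (parent k) :=
  graft_adj_inr.mpr ⟨fun h => (graftDepth_parent_lt hheight k).ne (congrArg _ h.symm), .inl rfl⟩

lemma eq_parent_of_graft_adj (hheight : ∀ k k', parent k = .inr k' → height k' < height k)
    {k : κ} {y : ι ⊕ κ} (hy : (graft T parent).Adj (.inr k) y)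
    (hd : graftDepth height y ≤ graftDepth height (.inr k : ι ⊕ κ)) : y = parent k := by
  obtain ⟨-, hy | ⟨k', rfl, hk'⟩⟩ := graft_adj_inr.mp hy
  · exact hy
  · have := hheight k' k hk'
    simp [graftDepth] at hd
    omega

lemma graft_induce_connected (hheight : ∀ k k', parent k = .inr k' → height k' < height k)
    {s S : Set (ι ⊕ κ)} (hSs : S ⊆ s)
    (hS : ((graft T parent).induce S).Connected)
    (hs : ∀ x ∈ s, x ∉ S → ∃ k, x = .inr k ∧ parent k ∈ s) :
    ((graft T parent).induce s).Connected :=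
  induce_connected_of_descent hSs hS (graftDepth height) fun x hx hxS => by
    obtain ⟨k, rfl, hk⟩ := hs x hx hxS
    exact ⟨_, hk, graft_adj_parent hheight k, graftDepth_parent_lt hheight k⟩

lemma graft_isTree (hheight : ∀ k k', parent k = .inr k' → height k' < height k)
    (hT : T.IsTree) : (graft T parent).IsTree := by
  refine ⟨?_, ?_⟩
  · rw [← (induceUnivIso _).connected_iff]
    refine graft_induce_connected hheight (Set.subset_univ (Set.range (graftInl T parent)))
      ((graftInl T parent).isoInduceRange.connected_iff.mp hT.1) fun x _ hx => ?_
    obtain _ | k := x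
    · exact absurd ⟨_, rfl⟩ hx
    · exact ⟨k, rfl, trivial⟩
  · refine isAcyclic_of_rank (graftDepth height) ?_ fun x y z hx hy hz hyd hzd => ?_
    · have hrange : {x | graftDepth height x = 0} = Set.range (graftInl T parent) := by
        ext (_ | _) <;> simp [graftDepth]
      rw [hrange]
      exact (graftInl T parent).isoInduceRange.isAcyclic_iff.mp hT.2
    · obtain _ | k := x
      · simp [graftDepth] at hx
      · rw [eq_parent_of_graft_adj hheight hy hyd, eq_parent_of_graft_adj hheight hz hzd]

end Graft

section AttachPaths

variable {V ι : Type} (τ : V → ℤ)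

def pathParent (f : V → ι) : (Σ u : V, Fin (τ u).toNat) → ι ⊕ Σ u : V, Fin (τ u).toNat
  | ⟨u, ⟨0, _⟩⟩ => .inl (f u)
  | ⟨u, ⟨i + 1, hi⟩⟩ => .inr ⟨u, ⟨i, by omega⟩⟩

-- `pathParent τ f ⟨u, i⟩ = .inr ⟨u, i - 1⟩` exactly when `i > 0`, so the image term is the
-- predecessor `{p_{u,i-1}}` of `p_{u,i}` on `P_u`, or empty.
def pathBags (bag : ι → Set V) (f : V → ι) :
    ι ⊕ (Σ u : V, Fin (τ u).toNat) → Set (V ⊕ Σ u : V, Fin (τ u).toNat)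
  | .inl t => .inl '' bag t
  | .inr k => insert (.inl k.1) (insert (.inr k) (.inr '' {k' | pathParent τ f k = .inr k'}))

variable {τ} {f : V → ι}

lemma pathParent_eq_inl {k : Σ u : V, Fin (τ u).toNat} {t : ι} (h : pathParent τ f k = .inl t) :
    t = f k.1 := by
  obtain ⟨u, ⟨_ | i, hi⟩⟩ := k <;> simp_all [pathParent]

lemma pathParent_eq_inr {k k' : Σ u : V, Fin (τ u).toNat} (h : pathParent τ f k = .inr k') :
    k'.1 = k.1 ∧ (k'.2 : ℕ) + 1 = k.2 := by
  obtain ⟨u, ⟨_ | i, hi⟩⟩ := k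
  · simp [pathParent] at h
  · simp only [pathParent, Sum.inr.injEq] at h
    subst h
    simp

lemma pathParent_of_succ {k k' : Σ u : V, Fin (τ u).toNat} (h₁ : k.1 = k'.1)
    (h₂ : (k.2 : ℕ) + 1 = k'.2) : pathParent τ f k' = .inr k := by
  obtain ⟨u, i, hi⟩ := k
  obtain ⟨u', j, hj⟩ := k'
  obtain rfl : u = u' := h₁
  obtain rfl : j = i + 1 := h₂.symm
  rfl

lemma pathParent_height_lt {k k' : Σ u : V, Fin (τ u).toNat} (h : pathParent τ f k = .inr k') :
    (k'.2 : ℕ) < k.2 := by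
  have := (pathParent_eq_inr h).2
  omega

variable {bag : ι → Set V}

lemma ncard_pathBags_inl (t : ι) : (pathBags τ bag f (.inl t)).ncard = (bag t).ncard :=
  Set.ncard_image_of_injective _ Sum.inl_injective

lemma ncard_pathBags_inr_le (k : Σ u : V, Fin (τ u).toNat) :
    (pathBags τ bag f (.inr k)).ncard ≤ 3 := by
  have hpred : {k' | pathParent τ f k = .inr k'}.Subsingleton :=
    fun a ha b hb => Sum.inr_injective (ha.symm.trans hb)
  set P : Set (V ⊕ Σ u : V, Fin (τ u).toNat) := .inr '' {k' | pathParent τ f k = .inr k'}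
  have hP : P.ncard ≤ 1 := by
    rw [Set.ncard_image_of_injective _ Sum.inr_injective]
    exact (Set.ncard_le_one hpred.finite).mpr hpred
  calc (pathBags τ bag f (.inr k)).ncard ≤ (insert (.inr k) P).ncard + 1 := Set.ncard_insert_le _ _
    _ ≤ P.ncard + 1 + 1 := by grw [Set.ncard_insert_le]
    _ ≤ 3 := by omega

lemma exists_mem_pathBags_of_adj {G : SimpleGraph V}
    (hedge : ∀ u v, G.Adj u v → ∃ t, u ∈ bag t ∧ v ∈ bag t)
    {x y : V ⊕ Σ u : V, Fin (τ u).toNat} (h : (attachPaths G τ).Adj x y) :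
    ∃ t, x ∈ pathBags τ bag f t ∧ y ∈ pathBags τ bag f t := by
  rw [attachPaths, fromRel_adj] at h
  obtain ⟨-, h | h⟩ := h <;> rcases x with a | k <;> rcases y with b | k' <;> simp only at h
  · obtain ⟨t, ha, hb⟩ := hedge a b h
    exact ⟨.inl t, Set.mem_image_of_mem _ ha, Set.mem_image_of_mem _ hb⟩
  · exact ⟨.inr k', by simp [pathBags, h]⟩
  · exact ⟨.inr k', by simp [pathBags, pathParent_of_succ h.1 h.2]⟩
  · obtain ⟨t, hb, ha⟩ := hedge b a h
    exact ⟨.inl t, Set.mem_image_of_mem _ ha, Set.mem_image_of_mem _ hb⟩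
  · exact ⟨.inr k, by simp [pathBags, h]⟩
  · exact ⟨.inr k, by simp [pathBags, pathParent_of_succ h.1 h.2]⟩

lemma pathBags_induce_connected {T : SimpleGraph ι} (hf : ∀ u, u ∈ bag (f u))
    (hconn : ∀ u, (T.induce {t | u ∈ bag t}).Connected) (x : V ⊕ Σ u : V, Fin (τ u).toNat) :
    ((graft T (pathParent τ f)).induce {t | x ∈ pathBags τ bag f t}).Connected := by
  obtain u | p := x
  · refine graft_induce_connected (height := fun k => k.2) (fun _ _ => pathParent_height_lt)
      (S := graftInl T (pathParent τ f) '' {t | u ∈ bag t}) ?_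
      ((hconn u).induce_image (graftInl T _).toHom) ?_
    · rintro _ ⟨t, ht, rfl⟩
      exact Set.mem_image_of_mem _ ht
    · rintro (t | k) hx hxS
      · exact absurd ⟨t, by simpa [pathBags] using hx, rfl⟩ hxS
      · obtain rfl : u = k.1 := by simpa [pathBags] using hx
        refine ⟨k, rfl, ?_⟩
        cases h : pathParent τ f k with
        | inl t => simpa [pathBags, pathParent_eq_inl h] using hf k.1
        | inr k' => simp [pathBags, (pathParent_eq_inr h).1]
  · refine graft_induce_connected (height := fun k => k.2) (fun _ _ => pathParent_height_lt)
      (S := {.inr p}) (by simp [pathBags]) Connected.of_subsingleton ?_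
    rintro (t | k) hx hxS
    · simp [pathBags] at hx
    · refine ⟨k, rfl, ?_⟩
      obtain rfl | hk : p = k ∨ pathParent τ f k = .inr p := by simpa [pathBags] using hx
      · exact absurd rfl hxS
      · simp [hk, pathBags]

end AttachPaths

/-- attaching the paths raises the treewidth to at most `max w 2`. -/
theorem stmt_4 {V : Type} (G : SimpleGraph V) (τ : V → ℤ) (w : ℕ)
    (hG : HasTreeDecompOfWidthLE G w) :
    HasTreeDecompOfWidthLE (attachPaths G τ) (max w 2) := by
  obtain ⟨ι, T, bag, hT, hcover, hedge, hconn, hsize⟩ := hG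
  choose f hf using hcover
  refine ⟨ι ⊕ Σ u : V, Fin (τ u).toNat, graft T (pathParent τ f), pathBags τ bag f,
    graft_isTree (height := fun k => k.2) (fun _ _ => pathParent_height_lt) hT, ?_,
    fun _ _ => exists_mem_pathBags_of_adj hedge, pathBags_induce_connected hf hconn, ?_⟩
  · rintro (u | k)
    · exact ⟨.inl (f u), Set.mem_image_of_mem _ (hf u)⟩
    · exact ⟨.inr k, by simp [pathBags]⟩
  · rintro (t | k)
    · rw [ncard_pathBags_inl]
      exact (hsize t).trans (by omega)
    · exact (ncard_pathBags_inr_le k).trans (by omega)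
end

section
/- Let G be a graph with threshold function τ, and let G' arise from G by attaching to every vertex u with τ(u) > 0 a path P_u of order τ(u), joining u to all vertices of P_u. If G is chordal, then G' is chordal. -/
open SimpleGraph

universe u

/-!
A cycle of length at least four inside the copy of `G` has a chord because `G` is chordal.
Otherwise the cycle meets some attached path `P_u`. The vertex of `P_u` of lowest index on the
cycle has no predecessor on it, so its two cycle-neighbours are `u` and its successor on `P_u`.
These are adjacent, and an edge between the two cycle-neighbours of a vertex is a chord unless
the cycle is a triangle.
-/

namespace SimpleGraph.Walk

variable {V W : Type*} {G : SimpleGraph V} {H : SimpleGraph W} {v : V}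

theorem IsChordless.of_map {f : G →g H} (hf : Function.Injective f) {u w : V} {p : G.Walk u w}
    (hp : (p.map f).IsChordless) : p.IsChordless := by
  refine isChordless_iff_forall_mem_edges.mpr fun x y hx hy hxy => ?_
  have hmem := hp.mem_edges (by simpa [support_map] using List.mem_map_of_mem hx)
    (by simpa [support_map] using List.mem_map_of_mem hy) (f.map_adj hxy)
  rw [edges_map, List.mem_map] at hmem
  obtain ⟨e, he, hfe⟩ := hmem
  rwa [← Sym2.map.injective hf (hfe.trans (Sym2.map_mk f x y).symm)]

theorem IsChordless.map (f : G ↪g H) {u w : V} {p : G.Walk u w} (hp : p.IsChordless) :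
    (p.map f.toHom).IsChordless := by
  refine isChordless_iff_forall_mem_edges.mpr fun x y hx hy hxy => ?_
  rw [support_map, List.mem_map] at hx hy
  obtain ⟨a, ha, rfl⟩ := hx
  obtain ⟨b, hb, rfl⟩ := hy
  rw [edges_map]
  exact List.mem_map_of_mem (hp.mem_edges ha hb (f.map_adj_iff.mp hxy))

theorem IsCycle.length_eq_three_of_toSubgraph_adj {c : G.Walk v v} (hc : c.IsCycle)
    (h : c.toSubgraph.Adj c.snd c.penultimate) : c.length = 3 := by
  have h3 := hc.three_le_length
  have hnbr : c.penultimate ∈ c.toSubgraph.neighborSet (c.getVert 1) := h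
  rw [hc.neighborSet_toSubgraph_internal one_ne_zero (by omega)] at hnbr
  rcases hnbr with hnbr | hnbr
  · rw [penultimate, Nat.sub_self, getVert_zero, hc.getVert_endpoint_iff (by omega)] at hnbr
    omega
  · have := hc.getVert_injOn' (by simp only [Set.mem_ofPred_eq]; omega)
      (by simp only [Set.mem_ofPred_eq]; omega) hnbr
    omega

theorem IsCycle.not_isChordless_of_neighborSet_subset [DecidableEq V] {c : G.Walk v v}
    (hc : c.IsCycle) (h4 : 4 ≤ c.length) {x y z : V} (hx : x ∈ c.support)
    (hsub : c.toSubgraph.neighborSet x ⊆ {y, z}) (hyz : G.Adj y z) : ¬ c.IsChordless := by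
  have hnbr : c.toSubgraph.neighborSet x = {y, z} :=
    Set.eq_of_subset_of_ncard_le hsub
      ((Set.ncard_pair hyz.ne).trans (hc.ncard_neighborSet_toSubgraph_eq_two hx).symm).le
  have hxy : c.toSubgraph.Adj x y := by simp [← Subgraph.mem_neighborSet, hnbr]
  have hxz : c.toSubgraph.Adj x z := by simp [← Subgraph.mem_neighborSet, hnbr]
  intro hchordless
  have hyz' : (c.rotate x hx).toSubgraph.Adj y z := by
    rw [toSubgraph_rotate, adj_toSubgraph_iff_mem_edges]
    exact hchordless.mem_edges (c.mem_support_of_adj_toSubgraph hxy.symm)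
      (c.mem_support_of_adj_toSubgraph hxz.symm) hyz
  -- after rotating `c` to start at `x`, its second and penultimate vertices are `y` and `z`
  have hc' := hc.rotate hx
  rw [← toSubgraph_rotate c hx, hc'.neighborSet_toSubgraph_endpoint, Set.pair_eq_pair_iff] at hnbr
  have hadj : (c.rotate x hx).toSubgraph.Adj (c.rotate x hx).snd (c.rotate x hx).penultimate := by
    rcases hnbr with ⟨rfl, rfl⟩ | ⟨rfl, rfl⟩
    exacts [hyz', hyz'.symm]
  have h3 := hc'.length_eq_three_of_toSubgraph_adj hadj
  rw [length_rotate] at h3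
  omega

end SimpleGraph.Walk

theorem isChordal_iff {V : Type*} {G : SimpleGraph V} :
    IsChordal G ↔
      ∀ ⦃v : V⦄ (c : G.Walk v v), c.IsCycle → 4 ≤ c.length → ¬ c.IsChordless := by
  simp [IsChordal, Walk.isChordless_iff_forall_mem_edges]

namespace IsChordal

variable {V W : Type*} {G : SimpleGraph V} {H : SimpleGraph W}

theorem of_iso (hG : IsChordal G) (e : G ≃g H) : IsChordal H :=
  isChordal_iff.mpr fun _ c hc h4 hcl => isChordal_iff.mp hG (c.map e.symm.toHom)
    (hc.map e.symm.injective) (by simpa using h4) (hcl.map e.symm.toEmbedding)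

theorem not_isChordless_of_support_subset_range (hG : IsChordal G) (f : G ↪g H) {w : W}
    {c : H.Walk w w} (hc : c.IsCycle) (h4 : 4 ≤ c.length)
    (hs : ∀ x ∈ c.support, x ∈ Set.range f) : ¬ c.IsChordless := by
  have hmap := Walk.map_induce c hs
  set g := (Embedding.induce (G := H) (Set.range f)).toHom
  intro hcl
  refine isChordal_iff.mp (hG.of_iso (Embedding.isoInduceRange f)) (c.induce _ hs)
    (.of_map (hmap ▸ hc)) ?_ (.of_map (f := g) Subtype.val_injective (by rw [hmap]; exact hcl))
  rwa [← Walk.length_map g, hmap]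

end IsChordal

section attachPaths

variable {V : Type*} {G : SimpleGraph V} {τ : V → ℤ}

@[simp]
theorem attachPaths_adj_inl_inl {a b : V} :
    (attachPaths G τ).Adj (.inl a) (.inl b) ↔ G.Adj a b := by
  simpa [attachPaths, G.adj_comm b a] using fun h : G.Adj a b => h.ne

@[simp]
theorem attachPaths_adj_inl_inr {a : V} {s : Σ u : V, Fin (τ u).toNat} :
    (attachPaths G τ).Adj (.inl a) (.inr s) ↔ a = s.1 := by
  simp [attachPaths]

theorem attachPaths_adj_inr {u : V} {i : Fin (τ u).toNat} {w : V ⊕ Σ u : V, Fin (τ u).toNat}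
    (h : (attachPaths G τ).Adj (.inr ⟨u, i⟩) w) :
    w = .inl u ∨
      ∃ k : Fin (τ u).toNat, ((i : ℕ) + 1 = k ∨ (k : ℕ) + 1 = i) ∧ w = .inr ⟨u, k⟩ := by
  rcases w with a | ⟨u', k⟩
  · simp_all [attachPaths]
  · obtain ⟨-, ⟨rfl, hik⟩ | ⟨rfl, hki⟩⟩ := (by simpa [attachPaths] using h)
    exacts [.inr ⟨k, .inl hik, rfl⟩, .inr ⟨k, .inr hki, rfl⟩]

def attachPathsInl (G : SimpleGraph V) (τ : V → ℤ) : G ↪g attachPaths G τ :=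
  ⟨⟨Sum.inl, Sum.inl_injective⟩, attachPaths_adj_inl_inl⟩

theorem attachPaths_toSubgraph_adj_of_minimal {v : V ⊕ Σ u : V, Fin (τ u).toNat}
    {c : (attachPaths G τ).Walk v v} {u : V} {j : Fin (τ u).toNat}
    (hmin : ∀ i, .inr ⟨u, i⟩ ∈ c.support → ¬ i < j)
    {w : V ⊕ Σ u : V, Fin (τ u).toNat} (hw : c.toSubgraph.Adj (.inr ⟨u, j⟩) w) :
    w = .inl u ∨ ∃ k : Fin (τ u).toNat, (k : ℕ) = j + 1 ∧ w = .inr ⟨u, k⟩ := by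
  rcases attachPaths_adj_inr hw.adj_sub with rfl | ⟨k, hjk | hkj, rfl⟩
  · exact .inl rfl
  · exact .inr ⟨k, hjk.symm, rfl⟩
  · exact absurd (Fin.lt_def.mpr (by omega)) (hmin k (c.mem_support_of_adj_toSubgraph hw.symm))

theorem attachPaths_not_isChordless_of_inr_mem_support {v : V ⊕ Σ u : V, Fin (τ u).toNat}
    {c : (attachPaths G τ).Walk v v} (hc : c.IsCycle) (h4 : 4 ≤ c.length) {u : V}
    {i : Fin (τ u).toNat} (hi : .inr ⟨u, i⟩ ∈ c.support) : ¬ c.IsChordless := by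
  classical
  obtain ⟨j, hj, hmin⟩ := wellFounded_lt.has_min
    {j | (Sum.inr ⟨u, j⟩ : V ⊕ Σ u : V, Fin (τ u).toNat) ∈ c.support} ⟨i, hi⟩
  obtain ⟨w, hw, hwu⟩ := Set.exists_ne_of_one_lt_ncard
    (by rw [hc.ncard_neighborSet_toSubgraph_eq_two hj]; norm_num) (Sum.inl u)
  obtain ⟨k, hk, rfl⟩ := (attachPaths_toSubgraph_adj_of_minimal hmin hw).resolve_left hwu
  refine hc.not_isChordless_of_neighborSet_subset h4 hj (y := Sum.inl u) (z := .inr ⟨u, k⟩) ?_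
    (attachPaths_adj_inl_inr.mpr rfl)
  intro w' hw'
  rcases attachPaths_toSubgraph_adj_of_minimal hmin hw' with rfl | ⟨k', hk', rfl⟩
  · exact Set.mem_insert _ _
  · rw [Fin.ext (hk'.trans hk.symm)]
    exact Set.mem_insert_of_mem _ rfl

end attachPaths

/-- if `G` is chordal then the path-attachment graph `G'` is chordal. -/
theorem stmt_5 {V : Type} (G : SimpleGraph V) (τ : V → ℤ) (hG : IsChordal G) :
    IsChordal (attachPaths G τ) := by
  refine isChordal_iff.mpr fun v c hc h4 => ?_
  by_cases hs : ∃ u i, .inr ⟨u, i⟩ ∈ c.support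
  · obtain ⟨u, i, hi⟩ := hs
    exact attachPaths_not_isChordless_of_inr_mem_support hc h4 hi
  · refine hG.not_isChordless_of_support_subset_range (attachPathsInl G τ) hc h4 fun x hx => ?_
    rcases x with a | ⟨u, i⟩
    exacts [⟨a, rfl⟩, absurd ⟨u, i, hx⟩ hs]
end

section
/- Let t be a non-negative integer, let G be a t-connected chordal graph, and let τ be a threshold function for G with τ(u) ≤ t for every vertex u. For every clique C = {v_0, v_1, …, v_{t−1}} of order t in G, the function σ with σ(v_i) = τ(v_i) − i for i ∈ {0,…,t−1} and σ(u) = 0 otherwise is a partial incentive of (G, τ). -/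
open SimpleGraph

universe u

/-!
Activate `v₀, …, v_{t-1}` in this order: `vᵢ` has the `i` active neighbours `v₀, …, v_{i-1}`,
which is its threshold `τ - σ`. Every other vertex has threshold at most `t`, so it suffices
that a set `H` containing the clique `K = {v₀, …, v_{t-1}}` and closed under "at least `t`
neighbours in `H`" is everything. By Dirac's lemma a chordal graph not contained in `K` has a
simplicial vertex `s ∉ K`. Deleting a simplicial vertex preserves `t`-connectivity, so by
induction `V ∖ {s} ⊆ H`; and `s` joins `H`, as `t`-connectivity gives it at least `t` neighbours.
-/

namespace SimpleGraph

variable {V : Type*} {G : SimpleGraph V}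

def ReachableIn (G : SimpleGraph V) (U : Set V) (a b : V) : Prop :=
  ∃ p : G.Walk a b, ∀ z ∈ p.support, z ∈ U

namespace ReachableIn

variable {U U' : Set V} {a b c : V}

lemma refl (ha : a ∈ U) : G.ReachableIn U a a :=
  ⟨.nil, by simpa using ha⟩

lemma symm : G.ReachableIn U a b → G.ReachableIn U b a :=
  fun ⟨p, hp⟩ => ⟨p.reverse, by simpa using hp⟩

lemma trans : G.ReachableIn U a b → G.ReachableIn U b c → G.ReachableIn U a c := by
  rintro ⟨p, hp⟩ ⟨q, hq⟩
  refine ⟨p.append q, fun z hz => ?_⟩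
  rcases (Walk.mem_support_append_iff _ _).mp hz with hz | hz
  exacts [hp z hz, hq z hz]

lemma mono (h : U ⊆ U') : G.ReachableIn U a b → G.ReachableIn U' a b :=
  fun ⟨p, hp⟩ => ⟨p, fun z hz => h (hp z hz)⟩

lemma right_mem : G.ReachableIn U a b → b ∈ U :=
  fun ⟨p, hp⟩ => hp b p.end_mem_support

lemma of_adj (ha : a ∈ U) (hb : b ∈ U) (h : G.Adj a b) : G.ReachableIn U a b :=
  ⟨h.toWalk, by simp [ha, hb]⟩

lemma within_component (hb : G.ReachableIn U a b) (hc : G.ReachableIn U a c) :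
    G.ReachableIn {z | G.ReachableIn U a z} b c := by
  classical
  obtain ⟨p, hp⟩ := hb.symm.trans hc
  exact ⟨p, fun z hz => hb.trans ⟨p.takeUntil z hz,
    fun w hw => hp w (p.support_takeUntil_subset_support hz hw)⟩⟩

end ReachableIn

lemma Walk.exists_shorter_of_not_isChordless {x y : V} (p : G.Walk x y)
    (hp : ¬ p.IsChordless) :
    ∃ q : G.Walk x y, (∀ z ∈ q.support, z ∈ p.support) ∧ q.length < p.length := by
  simp only [Walk.isChordless_iff_forall_mem_edges, not_forall] at hp
  obtain ⟨u, w, hu, hw, huw, hchord⟩ := hp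
  obtain ⟨i, rfl, hi⟩ := Walk.mem_support_iff_exists_getVert.mp hu
  obtain ⟨j, rfl, hj⟩ := Walk.mem_support_iff_exists_getVert.mp hw
  wlog hij : i < j generalizing i j
  · exact this j hj hw i hi hu huw.symm (by rwa [Sym2.eq_swap])
      ((not_lt.mp hij).lt_of_ne (by rintro rfl; exact huw.ne rfl))
  have hji : i + 1 < j := by
    by_contra! h
    obtain rfl : j = i + 1 := by omega
    exact hchord ((p.mk_mem_edges_iff_exists).mpr ⟨i, by omega, rfl⟩)
  refine ⟨(p.take i).append (.cons huw (p.drop j)), fun z hz => ?_, ?_⟩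
  · rcases (Walk.mem_support_append_iff _ _).mp hz with hz | hz
    · rw [Walk.support_take] at hz
      exact List.mem_of_mem_take hz
    · rw [Walk.support_cons, Walk.drop_support_eq_support_drop_min, List.mem_cons] at hz
      rcases hz with rfl | hz
      exacts [p.getVert_mem_support i, List.mem_of_mem_drop hz]
  · simp only [Walk.length_append, Walk.take_length, Walk.length_cons, Walk.drop_length]
    omega

lemma ReachableIn.exists_isPath_isChordless {U : Set V} {a b : V} (h : G.ReachableIn U a b) :
    ∃ p : G.Walk a b, p.IsPath ∧ p.IsChordless ∧ ∀ z ∈ p.support, z ∈ U := by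
  classical
  obtain ⟨p, hp⟩ := h
  induction hn : p.length using Nat.strong_induction_on generalizing p with
  | _ n ih =>
  have hbp : ∀ z ∈ p.bypass.support, z ∈ U := fun z hz =>
    hp z (p.support_bypass_subset_support hz)
  by_cases hc : p.bypass.IsChordless
  · exact ⟨p.bypass, p.bypass_isPath, hc, hbp⟩
  · obtain ⟨q, hq, hlt⟩ := p.bypass.exists_shorter_of_not_isChordless hc
    exact ih q.length (hn ▸ hlt.trans_le p.length_bypass_le_length) q
      (fun z hz => hbp z (hq z hz)) rfl

lemma Walk.IsChordless.append {x y z : V} {p : G.Walk x y} {q : G.Walk y z}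
    (hp : p.IsChordless) (hq : q.IsChordless)
    (hpq : ∀ a ∈ p.support, ∀ b ∈ q.support, G.Adj a b → a ∈ q.support ∨ b ∈ p.support) :
    (p.append q).IsChordless := by
  rw [Walk.isChordless_iff_forall_mem_edges] at hp hq ⊢
  intro a b ha hb hab
  rw [Walk.edges_append, List.mem_append]
  rw [Walk.mem_support_append_iff] at ha hb
  have hsame : (a ∈ p.support ∧ b ∈ p.support) ∨ (a ∈ q.support ∧ b ∈ q.support) := by
    rcases ha with ha | ha <;> rcases hb with hb | hb
    · exact .inl ⟨ha, hb⟩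
    · exact (hpq a ha b hb hab).elim (fun h => .inr ⟨h, hb⟩) (fun h => .inl ⟨ha, h⟩)
    · exact (hpq b hb a ha hab.symm).elim (fun h => .inr ⟨ha, h⟩) (fun h => .inl ⟨h, hb⟩)
    · exact .inr ⟨ha, hb⟩
  rcases hsame with ⟨ha, hb⟩ | ⟨ha, hb⟩
  exacts [.inl (hp ha hb hab), .inr (hq ha hb hab)]

lemma Walk.IsPath.ne_start_of_mem_tail {x y z : V} {p : G.Walk x y} (hp : p.IsPath)
    (hz : z ∈ p.support.tail) : z ≠ x := by
  rintro rfl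
  have := p.cons_tail_support ▸ hp.support_nodup
  exact (List.nodup_cons.mp this).1 hz

lemma Walk.exists_reachableIn_adj_notMem {U : Set V} {a b : V} (p : G.Walk a b) (ha : a ∈ U)
    (hp : ∃ z ∈ p.support, z ∉ U) :
    ∃ u w, G.ReachableIn U a u ∧ G.Adj u w ∧ w ∈ p.support ∧ w ∉ U := by
  induction p with
  | nil =>
    obtain ⟨z, hz, hzU⟩ := hp
    rw [Walk.support_nil, List.mem_singleton] at hz
    exact absurd (hz ▸ ha) hzU
  | @cons a c b h q ih =>
    by_cases hc : c ∈ U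
    · obtain ⟨z, hz, hzU⟩ := hp
      have hzq : z ∈ q.support := by
        rw [Walk.support_cons, List.mem_cons] at hz
        exact hz.resolve_left (by rintro rfl; exact hzU ha)
      obtain ⟨u, w, hu, huw, hw, hwU⟩ := ih hc ⟨z, hzq, hzU⟩
      exact ⟨u, w, (ReachableIn.of_adj ha hc h).trans hu, huw, by simp [hw], hwU⟩
    · exact ⟨a, c, .refl ha, h, by simp, hc⟩

lemma ReachableIn.exists_adj_of_insert {U : Set V} {a b v : V}
    (h : G.ReachableIn (insert v U) a b) (ha : a ∈ U) (hab : ¬ G.ReachableIn U a b) :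
    ∃ u, G.ReachableIn U a u ∧ G.Adj u v := by
  obtain ⟨p, hp⟩ := h
  have hexit : ∃ z ∈ p.support, z ∉ U := by
    by_contra! h
    exact hab ⟨p, h⟩
  obtain ⟨u, w, hu, huw, hw, hwU⟩ := p.exists_reachableIn_adj_notMem ha hexit
  obtain rfl : w = v := (hp w hw).resolve_right hwU
  exact ⟨u, hu, huw⟩

/-- A separator of minimum size: each of its vertices has neighbours in the components of both
`a` and `b`, since otherwise it could be dropped. -/
lemma exists_separator_of_not_adj [Finite V] {W : Set V} {a b : V} (ha : a ∈ W) (hb : b ∈ W)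
    (hab : a ≠ b) (hnadj : ¬ G.Adj a b) :
    ∃ S ⊆ W, a ∉ S ∧ b ∉ S ∧ ¬ G.ReachableIn (W \ S) a b ∧
      ∀ v ∈ S, (∃ u, G.ReachableIn (W \ S) a u ∧ G.Adj u v) ∧
        (∃ u, G.ReachableIn (W \ S) b u ∧ G.Adj u v) := by
  set 𝒮 := {S : Set V | S ⊆ W ∧ a ∉ S ∧ b ∉ S ∧ ¬ G.ReachableIn (W \ S) a b}
  have hpair : W \ {a, b} ∈ 𝒮 := by
    refine ⟨Set.sdiff_subset, by simp, by simp, fun ⟨p, hp⟩ => ?_⟩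
    cases p with
    | nil => exact hab rfl
    | @cons _ c _ h q =>
      have hc : c ∈ ({a, b} : Set V) := by
        by_contra h'
        exact (hp c (by simp)).2 ⟨(hp c (by simp)).1, h'⟩
      rcases hc with rfl | rfl
      exacts [h.ne rfl, hnadj h]
  obtain ⟨S, ⟨hSW, haS, hbS, hsep⟩, hmin⟩ :=
    Set.exists_min_image 𝒮 Set.ncard (Set.toFinite _) ⟨_, hpair⟩
  refine ⟨S, hSW, haS, hbS, hsep, fun v hv => ?_⟩
  have hv' : G.ReachableIn (insert v (W \ S)) a b := by
    by_contra h
    have := hmin (S \ {v}) ⟨Set.sdiff_subset.trans hSW, fun h' => haS h'.1,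
      fun h' => hbS h'.1, fun h' => h (h'.mono fun z hz => ?_)⟩
    · exact (Set.ncard_sdiff_singleton_lt_of_mem hv).not_ge this
    · by_cases hzv : z = v
      exacts [.inl hzv, .inr ⟨hz.1, fun hzS => hz.2 ⟨hzS, hzv⟩⟩]
  exact ⟨hv'.exists_adj_of_insert ⟨ha, haS⟩ hsep,
    hv'.symm.exists_adj_of_insert ⟨hb, hbS⟩ (hsep ∘ .symm)⟩

lemma ReachableIn.of_insert_of_isClique {U : Set V} {s a b : V}
    (hs : G.IsClique (G.neighborSet s ∩ U)) (h : G.ReachableIn (insert s U) a b) (ha : a ∈ U)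
    (hb : b ≠ s) : G.ReachableIn U a b := by
  -- A walk through `s` can skip it: the two neighbours of `s` on the walk are adjacent.
  have key : ∀ {c d : V} (q : G.Walk c d), (∀ z ∈ q.support, z ∈ insert s U) → d ≠ s →
      ∀ a ∈ U, (a = c ∨ G.Adj a c) → G.ReachableIn U a d := by
    intro c d q
    induction q with
    | nil =>
      intro hq hd a ha hac
      have hcU : _ ∈ U := (hq _ (List.mem_singleton_self _)).resolve_left hd
      rcases hac with rfl | hac
      exacts [.refl ha, .of_adj ha hcU hac]
    | @cons c e d hce q ih =>
      intro hq hd a ha hac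
      have hq' : ∀ z ∈ q.support, z ∈ insert s U := fun z hz => hq z (by simp [hz])
      by_cases hcs : c = s
      · subst hcs
        have heU : e ∈ U := (hq' e q.start_mem_support).resolve_left hce.ne'
        refine ih hq' hd a ha ?_
        rcases hac with rfl | hac
        · exact .inr hce
        · by_cases hae : a = e
          · exact .inl hae
          · exact .inr (hs ⟨hac.symm, ha⟩ ⟨hce, heU⟩ hae)
      · have hcU : c ∈ U := (hq c (by simp)).resolve_left hcs
        have hac' : G.ReachableIn U a c := by
          rcases hac with rfl | hac
          exacts [.refl ha, .of_adj ha hcU hac]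
        exact hac'.trans (ih hq' hd c hcU (.inr hce))
  obtain ⟨p, hp⟩ := h
  exact key p hp hb a ha (.inl rfl)

lemma ReachableIn.isClique_neighborSet_inter_of_component {W S : Set V} {c s : V}
    (hs : G.ReachableIn (W \ S) c s)
    (h : G.IsClique (G.neighborSet s ∩ ({z | G.ReachableIn (W \ S) c z} ∪ S))) :
    G.IsClique (G.neighborSet s ∩ W) := by
  refine h.subset ?_
  rintro z ⟨hzs, hzW⟩
  by_cases hzS : z ∈ S
  · exact ⟨hzs, .inr hzS⟩
  · exact ⟨hzs, .inl (hs.trans (.of_adj hs.right_mem ⟨hzW, hzS⟩ hzs))⟩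

def TPreconnectedIn (G : SimpleGraph V) (t : ℕ) (W : Set V) : Prop :=
  ∀ S : Set V, S.ncard < t → ∀ a ∈ W \ S, ∀ b ∈ W \ S, G.ReachableIn (W \ S) a b

namespace TPreconnectedIn

variable {t : ℕ} {W : Set V} {s : V}

lemma diff_singleton (h : G.TPreconnectedIn t W) (hs : G.IsClique (G.neighborSet s ∩ W)) :
    G.TPreconnectedIn t (W \ {s}) := by
  intro S hS a ha b hb
  have hab : G.ReachableIn (W \ S) a b := h S hS a ⟨ha.1.1, ha.2⟩ b ⟨hb.1.1, hb.2⟩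
  refine (hab.mono (U' := insert s ((W \ {s}) \ S)) fun z hz => ?_).of_insert_of_isClique
    (hs.subset (Set.inter_subset_inter_right _ fun z hz => hz.1.1)) ha fun hbs => hb.1.2 hbs
  by_cases hzs : z = s
  · exact .inl hzs
  · exact .inr ⟨⟨hz.1, hzs⟩, hz.2⟩

lemma le_ncard_neighborSet_inter [Finite V] (h : G.TPreconnectedIn t W) (hW : t < W.ncard)
    (hs : s ∈ W) : t ≤ (G.neighborSet s ∩ W).ncard := by
  by_contra! hlt
  set S := G.neighborSet s ∩ W
  have hsS : s ∉ S := fun h => G.irrefl h.1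
  have hWS : 1 < (W \ S).ncard := by
    have := Set.ncard_le_ncard_sdiff_add_ncard W S
    omega
  obtain ⟨b, hb, hbs⟩ := Set.exists_ne_of_one_lt_ncard hWS s
  obtain ⟨p, hp⟩ := h S hlt s ⟨hs, hsS⟩ b hb
  have hnil : ¬ p.Nil := fun hn => hbs hn.eq.symm
  have hsnd := hp p.snd (p.getVert_mem_support 1)
  exact hsnd.2 ⟨p.adj_snd hnil, hsnd.1⟩

end TPreconnectedIn

end SimpleGraph

section

variable {V : Type*} {G : SimpleGraph V}

/-- Shortest such paths would close a chordless cycle of length at least four. -/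
lemma IsChordal.adj_of_reachableIn {A B : Set V} {x y : V} (hch : IsChordal G) (hxy : x ≠ y)
    (hAB : Disjoint A B) (hnadj : ∀ a ∈ A, ∀ b ∈ B, ¬ G.Adj a b)
    (hA : G.ReachableIn (insert x (insert y A)) x y)
    (hB : G.ReachableIn (insert x (insert y B)) y x) :
    G.Adj x y := by
  by_contra hxy'
  obtain ⟨p, hpPath, hpCl, hpA⟩ := hA.exists_isPath_isChordless
  obtain ⟨q, hqPath, hqCl, hqB⟩ := hB.exists_isPath_isChordless
  have hlong : ∀ r : G.Walk x y, 1 < r.length := fun r => by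
    by_contra! h
    interval_cases hl : r.length
    exacts [hxy (r.eq_of_length_eq_zero hl), hxy' (r.adj_of_length_eq_one hl)]
  have hpA' : ∀ z ∈ p.support, z ≠ x → z ≠ y → z ∈ A := fun z hz hzx hzy => by
    simpa [hzx, hzy] using hpA z hz
  have hqB' : ∀ z ∈ q.support, z ≠ x → z ≠ y → z ∈ B := fun z hz hzx hzy => by
    simpa [hzx, hzy] using hqB z hz
  have hcyc : (p.append q).IsCycle := by
    refine hpPath.isCycle_append hqPath (fun z hzp hzq => ?_) (.inl (hlong p))
    have hzx := hpPath.ne_start_of_mem_tail hzp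
    have hzy := hqPath.ne_start_of_mem_tail hzq
    exact hAB.ne_of_mem (hpA' z (List.mem_of_mem_tail hzp) hzx hzy)
      (hqB' z (List.mem_of_mem_tail hzq) hzx hzy) rfl
  have hcyc_len : 4 ≤ (p.append q).length := by
    have := hlong q.reverse
    rw [Walk.length_reverse] at this
    rw [Walk.length_append]
    linarith [hlong p]
  obtain ⟨u, w, hu, hw, huw, hnot⟩ := hch (p.append q) hcyc hcyc_len
  refine hnot (Walk.isChordless_iff_forall_mem_edges.mp (hpCl.append hqCl ?_) hu hw huw)
  intro a ha b hb hab
  by_cases ha' : a = x ∨ a = y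
  · left
    rcases ha' with rfl | rfl
    exacts [q.end_mem_support, q.start_mem_support]
  by_cases hb' : b = x ∨ b = y
  · right
    rcases hb' with rfl | rfl
    exacts [p.start_mem_support, p.end_mem_support]
  rw [not_or] at ha' hb'
  exact absurd hab (hnadj a (hpA' a ha ha'.1 ha'.2) b (hqB' b hb hb'.1 hb'.2))

lemma IsChordal.isClique_of_separator (hch : IsChordal G) {U S : Set V} {a b : V}
    (hsep : ¬ G.ReachableIn U a b)
    (hS : ∀ v ∈ S, (∃ u, G.ReachableIn U a u ∧ G.Adj u v) ∧
      (∃ u, G.ReachableIn U b u ∧ G.Adj u v)) :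
    G.IsClique S := by
  have hpath : ∀ {c x y u w : V}, G.ReachableIn U c u → G.ReachableIn U c w → G.Adj u x →
      G.Adj w y → G.ReachableIn (insert x (insert y {z | G.ReachableIn U c z})) x y := by
    intro c x y u w hu hw hux hwy
    have hC : {z | G.ReachableIn U c z} ⊆ insert x (insert y {z | G.ReachableIn U c z}) :=
      (Set.subset_insert _ _).trans (Set.subset_insert _ _)
    exact ((ReachableIn.of_adj (by simp) (hC hu) hux.symm).trans
      ((hu.within_component hw).mono hC)).trans (ReachableIn.of_adj (hC hw) (by simp) hwy)
  intro x hx y hy hxy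
  obtain ⟨⟨ux, hux, hxa⟩, ⟨wx, hwx, hxb⟩⟩ := hS x hx
  obtain ⟨⟨uy, huy, hya⟩, ⟨wy, hwy, hyb⟩⟩ := hS y hy
  refine hch.adj_of_reachableIn (A := {z | G.ReachableIn U a z})
    (B := {z | G.ReachableIn U b z}) hxy
    (Set.disjoint_left.mpr fun z hza hzb => hsep (hza.trans hzb.symm))
    (fun z hz z' hz' h => hsep ((hz.trans (.of_adj hz.right_mem hz'.right_mem h)).trans hz'.symm))
    (hpath hux huy hxa hya) ?_
  rw [Set.insert_comm]
  exact hpath hwy hwx hyb hxb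

/-- Dirac's lemma, relative to `W`: unless `W ⊆ K`, some vertex of `W \ K` is simplicial in
`G[W]`. -/
theorem IsChordal.exists_isClique_neighborSet_inter [Finite V] (hch : IsChordal G) :
    ∀ {K : Set V} (W : Set V), G.IsClique K → ¬ W ⊆ K →
      ∃ s ∈ W \ K, G.IsClique (G.neighborSet s ∩ W) := by
  intro K W
  induction hn : W.ncard using Nat.strong_induction_on generalizing K W with
  | _ n ih =>
  intro hK hWK
  by_cases hW : G.IsClique W
  · obtain ⟨s, hsW, hsK⟩ := Set.not_subset.mp hWK
    exact ⟨s, ⟨hsW, hsK⟩, hW.subset Set.inter_subset_right⟩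
  obtain ⟨a, ha, b, hb, hab, hnadj⟩ : ∃ a ∈ W, ∃ b ∈ W, a ≠ b ∧ ¬ G.Adj a b := by
    simpa [IsClique, Set.Pairwise] using hW
  obtain ⟨S, hSW, haS, hbS, hsep, hS⟩ := exists_separator_of_not_adj ha hb hab hnadj
  have hside : ∀ c ∈ W, c ∉ S → ∀ d ∈ W, d ∉ S → ¬ G.ReachableIn (W \ S) c d →
      ∃ s, G.ReachableIn (W \ S) c s ∧ G.IsClique (G.neighborSet s ∩ W) := by
    intro c hc hcS d hd hdS hcd
    set C := {z | G.ReachableIn (W \ S) c z}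
    have hCW : C ∪ S ⊆ W := Set.union_subset (fun z hz => hz.right_mem.1) hSW
    have hdC : d ∉ C ∪ S := by
      rintro (h | h)
      exacts [hcd h, hdS h]
    have hlt : (C ∪ S).ncard < n :=
      hn ▸ Set.ncard_lt_ncard (hCW.ssubset_of_mem_notMem hd hdC)
    obtain ⟨s, ⟨hsC | hsS, hsS'⟩, hs⟩ := ih _ hlt (C ∪ S) rfl
      (hch.isClique_of_separator hsep hS) fun h => hcS (h (.inl (.refl ⟨hc, hcS⟩)))
    · exact ⟨s, hsC, hsC.isClique_neighborSet_inter_of_component hs⟩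
    · exact absurd hsS hsS'
  obtain ⟨sa, hsa, hsa'⟩ := hside a ha haS b hb hbS hsep
  obtain ⟨sb, hsb, hsb'⟩ := hside b hb hbS a ha haS (hsep ∘ .symm)
  by_cases hsaK : sa ∈ K
  · refine ⟨sb, ⟨hsb.right_mem.1, fun hsbK => ?_⟩, hsb'⟩
    by_cases hsab : sa = sb
    · exact hsep (hsa.trans (hsab ▸ hsb.symm))
    · exact hsep ((hsa.trans (.of_adj hsa.right_mem hsb.right_mem (hK hsaK hsbK hsab))).trans
        hsb.symm)
  · exact ⟨sa, ⟨hsa.right_mem.1, hsaK⟩, hsa'⟩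

lemma TConnected.tPreconnectedIn_univ [Fintype V] {t : ℕ} (h : TConnected G t) :
    G.TPreconnectedIn t Set.univ := by
  intro S hS a ha b hb
  obtain ⟨p⟩ := (h.2 S hS).preconnected ⟨a, ha.2⟩ ⟨b, hb.2⟩
  have hp : ∀ z ∈ (p.map (Embedding.induce Sᶜ).toHom).support, z ∈ Set.univ \ S := by
    intro z hz
    rw [Walk.support_map] at hz
    obtain ⟨⟨z, hzS⟩, -, rfl⟩ := List.mem_map.mp hz
    exact ⟨trivial, hzS⟩
  exact ⟨_, hp⟩

lemma HullClosed.of_le_of_notMem {τ τ' : V → ℤ} {H : Set V} (hH : HullClosed G τ H)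
    (h : ∀ u ∉ H, τ u ≤ τ' u) : HullClosed G τ' H := fun u hu => by
  by_contra huH
  exact huH (hH u ((h u huH).trans hu))

lemma HullClosed.apply_mem_of_isClique [Finite V] {t : ℕ} {τ : V → ℤ} {H : Set V}
    (hH : HullClosed G τ H) {v : Fin t → V} (hinj : Function.Injective v)
    (hclique : ∀ i j : Fin t, i ≠ j → G.Adj (v i) (v j)) (hτ : ∀ i, τ (v i) ≤ i) (i : Fin t) :
    v i ∈ H := by
  induction i using WellFoundedLT.induction with
  | _ i ih =>
  have hsub : v '' Set.Iio i ⊆ G.neighborSet (v i) ∩ H := by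
    rintro _ ⟨j, hj, rfl⟩
    exact ⟨hclique i j hj.ne', ih j hj⟩
  have hcard : (v '' Set.Iio i).ncard = i := by
    rw [Set.ncard_image_of_injective _ hinj, ← Finset.coe_Iio, Set.ncard_coe_finset,
      Fin.card_Iio]
  refine hH _ ((hτ i).trans ?_)
  exact_mod_cast hcard ▸ Set.ncard_le_ncard hsub

theorem IsChordal.subset_of_hullClosed [Finite V] (hch : IsChordal G) {t : ℕ} {K H : Set V}
    (hK : G.IsClique K) (hKt : t ≤ K.ncard) (hKH : K ⊆ H)
    (hH : HullClosed G (fun _ => (t : ℤ)) H) :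
    ∀ W : Set V, G.TPreconnectedIn t W → K ⊆ W → W ⊆ H := by
  intro W
  induction hn : W.ncard using Nat.strong_induction_on generalizing W with
  | _ n ih =>
  intro hW hKW
  by_cases hWK : W ⊆ K
  · exact hWK.trans hKH
  obtain ⟨s, ⟨hsW, hsK⟩, hs⟩ := hch.exists_isClique_neighborSet_inter W hK hWK
  have hrest : W \ {s} ⊆ H :=
    ih _ (hn ▸ Set.ncard_sdiff_singleton_lt_of_mem hsW) _ rfl (hW.diff_singleton hs)
      fun k hk => ⟨hKW hk, fun hks => hsK (Set.mem_singleton_iff.mp hks ▸ hk)⟩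
  have hdeg : t ≤ (G.neighborSet s ∩ W).ncard :=
    hW.le_ncard_neighborSet_inter
      (hKt.trans_lt (Set.ncard_lt_ncard (hKW.ssubset_of_mem_notMem hsW hsK))) hsW
  have hsub : G.neighborSet s ∩ W ⊆ G.neighborSet s ∩ H := fun z hz =>
    ⟨hz.1, hrest ⟨hz.2, fun hzs => G.irrefl (Set.mem_singleton_iff.mp hzs ▸ hz.1)⟩⟩
  have hsH : s ∈ H := hH s <| show (t : ℤ) ≤ _ by
    exact_mod_cast hdeg.trans (Set.ncard_le_ncard hsub)
  intro z hz
  by_cases hzs : z = s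
  · exact hzs ▸ hsH
  · exact hrest ⟨hz, hzs⟩

end

/-- for a clique `v₀,…,v_{t-1}` of order `t` in a `t`-connected chordal
graph with thresholds at most `t`, the function `σ` with `σ(vᵢ) = τ(vᵢ) - i` and
`σ = 0` elsewhere is a partial incentive, i.e. `H_{(G,τ-σ)}(∅) = V(G)`. -/
theorem stmt_6 {V : Type} [Fintype V] (G : SimpleGraph V) (t : ℕ)
    (hcon : TConnected G t) (hch : IsChordal G)
    (τ : V → ℤ) (hτ : ∀ u : V, τ u ≤ t)
    (v : Fin t → V) (hinj : Function.Injective v)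
    (hclique : ∀ i j : Fin t, i ≠ j → G.Adj (v i) (v j))
    (σ : V → ℤ)
    (hσ1 : ∀ i : Fin t, σ (v i) = τ (v i) - i)
    (hσ2 : ∀ u : V, (∀ i : Fin t, v i ≠ u) → σ u = 0) :
    hull G (fun u => τ u - σ u) ∅ = Set.univ := by
  refine Set.sInter_eq_univ.mpr fun H hH => Set.eq_univ_of_univ_subset ?_
  have hvH : ∀ i, v i ∈ H := hH.2.apply_mem_of_isClique hinj hclique fun i => by simp [hσ1]
  have hK : G.IsClique (Set.range v) := by
    rintro _ ⟨i, rfl⟩ _ ⟨j, rfl⟩ hij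
    exact hclique i j fun h => hij (h ▸ rfl)
  have hKt : t ≤ (Set.range v).ncard := by simp [Set.ncard_range_of_injective hinj]
  have hHt : HullClosed G (fun _ => (t : ℤ)) H := hH.2.of_le_of_notMem fun u hu => by
    simpa [hσ2 u fun i h => hu (h ▸ hvH i)] using hτ u
  exact hch.subset_of_hullClosed hK hKt (Set.range_subset_iff.mpr hvH) hHt _
    hcon.tPreconnectedIn_univ (Set.subset_univ _)
end

section
/- Let t be a non-negative integer, let G be a t-connected chordal graph, and let τ be a threshold function for G with τ(u) ≤ t for every vertex u. Then pi(G, τ) ≤ C(t+1, 2) = t(t+1)/2. -/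
open SimpleGraph

universe u

/-!
Every nonempty vertex set `s` of a finite chordal graph contains a vertex that is simplicial in
`G[s]` (Dirac): a minimal separator of two non-adjacent vertices is a clique, so each side of it
contributes a simplicial vertex. Deleting a simplicial vertex never disconnects anything, so
`G[s]` stays connected after the deletion of fewer than `t` vertices, and in such a set every
vertex has at least `min t (|s| - 1)` neighbours in `s`. Peeling off simplicial vertices thus
orders `V` as `v₁, …, vₙ` with at least `min t (i - 1)` neighbours of `vᵢ` among its
predecessors; the incentive `(τ vᵢ - min t (i - 1))⁺ ≤ (t - (i - 1))⁺` activates the vertices in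
this order, at total cost at most `t + (t - 1) + ⋯ + 1`.
-/

section

variable {V : Type*} {G : SimpleGraph V}

namespace SimpleGraph

def WalkIn (G : SimpleGraph V) (s : Set V) (u v : V) : Prop :=
  ∃ p : G.Walk u v, ∀ x ∈ p.support, x ∈ s

namespace WalkIn

variable {s s' : Set V} {u v w : V}

lemma refl (hu : u ∈ s) : G.WalkIn s u u :=
  ⟨.nil, by simpa⟩

lemma right_mem (h : G.WalkIn s u v) : v ∈ s :=
  h.choose_spec v h.choose.end_mem_support

lemma symm (h : G.WalkIn s u v) : G.WalkIn s v u := by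
  obtain ⟨p, hp⟩ := h
  exact ⟨p.reverse, by simpa using hp⟩

lemma trans (h : G.WalkIn s u v) (h' : G.WalkIn s v w) : G.WalkIn s u w := by
  obtain ⟨p, hp⟩ := h
  obtain ⟨q, hq⟩ := h'
  exact ⟨p.append q, by simpa [Walk.mem_support_append_iff, or_imp, forall_and] using ⟨hp, hq⟩⟩

lemma trans_adj (h : G.WalkIn s u v) (hvw : G.Adj v w) (hw : w ∈ s) : G.WalkIn s u w :=
  h.trans ⟨.cons hvw .nil, by simp [h.right_mem, hw]⟩

lemma mono (hss' : s ⊆ s') (h : G.WalkIn s u v) : G.WalkIn s' u v := by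
  obtain ⟨p, hp⟩ := h
  exact ⟨p, fun x hx => hss' (hp x hx)⟩

lemma setOf_walkIn (h : G.WalkIn s u v) : G.WalkIn {x | G.WalkIn s u x} u v := by
  classical
  obtain ⟨p, hp⟩ := h
  exact ⟨p, fun x hx =>
    ⟨p.takeUntil x hx, fun y hy => hp y (p.support_takeUntil_subset_support hx hy)⟩⟩

end WalkIn

lemma Connected.walkIn_induce {s : Set V} (h : (G.induce s).Connected) {u v : V}
    (hu : u ∈ s) (hv : v ∈ s) : G.WalkIn s u v := by
  obtain ⟨p⟩ := h.preconnected ⟨u, hu⟩ ⟨v, hv⟩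
  have hp : ∀ x ∈ (p.map (Embedding.induce s).toHom).support, x ∈ s := by
    simp only [Walk.support_map, List.mem_map]
    rintro _ ⟨y, -, rfl⟩
    exact y.2
  exact ⟨_, hp⟩

namespace Walk

lemma IsPath.ne_of_mem_support_tail {u w z : V} {p : G.Walk u w} (hp : p.IsPath)
    (hz : z ∈ p.support.tail) : z ≠ u := by
  rintro rfl
  have := hp.support_nodup
  rw [← p.cons_tail_support, List.nodup_cons] at this
  exact this.1 hz

lemma one_lt_length {u w : V} (p : G.Walk u w) (huw : u ≠ w) (hadj : ¬ G.Adj u w) :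
    1 < p.length := by
  have h0 : p.length ≠ 0 := fun h => huw (eq_of_length_eq_zero h)
  have h1 : p.length ≠ 1 := fun h => hadj (adj_of_length_eq_one h)
  omega

lemma IsPath.isCycle_append_reverse {u w : V} {P Q : G.Walk u w} (hP : P.IsPath)
    (hQ : Q.IsPath) (hlen : 1 < P.length)
    (hPQ : ∀ z ∈ P.support, z ∈ Q.support → z = u ∨ z = w) : (P.append Q.reverse).IsCycle := by
  refine hP.isCycle_append hQ.reverse (fun z hzP hzQ => ?_) (.inl hlen)
  have hzQ' : z ∈ Q.support := by simpa using List.mem_of_mem_tail hzQ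
  rcases hPQ z (List.mem_of_mem_tail hzP) hzQ' with rfl | rfl
  · exact hP.ne_of_mem_support_tail hzP rfl
  · exact hQ.reverse.ne_of_mem_support_tail hzQ rfl

lemma exists_shorter_of_chord {u w x y : V} (p : G.Walk u w) (hx : x ∈ p.support)
    (hy : y ∈ p.support) (hxy : G.Adj x y) (he : s(x, y) ∉ p.edges) :
    ∃ q : G.Walk u w, q.length < p.length ∧ ∀ z ∈ q.support, z ∈ p.support := by
  classical
  induction p with
  | nil =>
    simp only [support_nil, List.mem_singleton] at hx hy
    exact absurd (hx ▸ hy ▸ hxy) (G.irrefl)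
  | @cons u c w h q ih =>
    have shortcut : ∀ z ∈ q.support, G.Adj u z → s(u, z) ∉ (cons h q).edges →
        ∃ r : G.Walk u w, r.length < (cons h q).length ∧
          ∀ z ∈ r.support, z ∈ (cons h q).support := by
      intro z hz huz hne
      have hzc : z ≠ c := by rintro rfl; simp at hne
      refine ⟨cons huz (q.dropUntil z hz), ?_, ?_⟩
      · simpa using length_dropUntil_lt_length hz hzc
      · simp only [support_cons, List.mem_cons]
        exact fun a ha => ha.imp_right (q.support_dropUntil_subset_support hz ·)
    rw [support_cons, List.mem_cons] at hx hy
    rcases hx with rfl | hx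
    · exact shortcut y (hy.resolve_left hxy.ne') hxy he
    rcases hy with rfl | hy
    · exact shortcut x hx hxy.symm (by rwa [Sym2.eq_swap])
    obtain ⟨r, hr, hrq⟩ := ih hx hy (fun hq => he (by simp [hq]))
    refine ⟨cons h r, by simpa using hr, ?_⟩
    simp only [support_cons, List.mem_cons]
    exact fun a ha => ha.imp_right (hrq a)

end Walk

lemma WalkIn.exists_chordless_path {s : Set V} {u v : V} (h : G.WalkIn s u v) :
    ∃ p : G.Walk u v, p.IsPath ∧ (∀ x ∈ p.support, x ∈ s) ∧
      ∀ x ∈ p.support, ∀ y ∈ p.support, G.Adj x y → s(x, y) ∈ p.edges := by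
  classical
  have hex : ∃ n, ∃ p : G.Walk u v, (∀ x ∈ p.support, x ∈ s) ∧ p.length = n :=
    let ⟨p, hp⟩ := h; ⟨_, p, hp, rfl⟩
  obtain ⟨p, hp, hlen⟩ := Nat.find_spec hex
  have hmin : ∀ q : G.Walk u v, (∀ x ∈ q.support, x ∈ s) → p.length ≤ q.length :=
    fun q hq => hlen ▸ Nat.find_min' hex ⟨q, hq, rfl⟩
  have hbp : ∀ x ∈ p.bypass.support, x ∈ s := fun x hx => hp x (p.support_bypass_subset_support hx)
  refine ⟨p.bypass, p.bypass_isPath, hbp, fun x hx y hy hxy => ?_⟩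
  by_contra he
  obtain ⟨q, hq, hqp⟩ := p.bypass.exists_shorter_of_chord hx hy hxy he
  have := hmin q fun z hz => hbp z (hqp z hz)
  have := p.length_bypass_le_length
  omega

end SimpleGraph

-- Shortest such walks are chordless paths; together they form a cycle of length at least four
-- whose only possible chords would join `A` to `B`.
lemma IsChordal.adj_of_walkIn_of_walkIn (hch : IsChordal G) {A B : Set V} {u w : V}
    (hAB : Disjoint A B) (hnoadj : ∀ a ∈ A, ∀ b ∈ B, ¬ G.Adj a b) (huw : u ≠ w)
    (hA : G.WalkIn (A ∪ {u, w}) u w) (hB : G.WalkIn (B ∪ {u, w}) u w) : G.Adj u w := by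
  by_contra hadj
  obtain ⟨P, hP, hPA, hPc⟩ := hA.exists_chordless_path
  obtain ⟨Q, hQ, hQB, hQc⟩ := hB.exists_chordless_path
  have hlen : ∀ q : G.Walk u w, 1 < q.length := fun q => q.one_lt_length huw hadj
  have hPQ : ∀ z ∈ P.support, z ∈ Q.support → z = u ∨ z = w := by
    intro z hzP hzQ
    rcases hPA z hzP with hzA | hz
    · rcases hQB z hzQ with hzB | hz
      · exact absurd hzB (hAB.notMem_of_mem_left hzA)
      · exact hz
    · exact hz
  have hcyc_len : 4 ≤ (P.append Q.reverse).length := by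
    have := hlen P
    have := hlen Q
    simp only [Walk.length_append, Walk.length_reverse]
    omega
  obtain ⟨x, y, hx, hy, hxy, he⟩ := hch _ (hP.isCycle_append_reverse hQ (hlen P) hPQ) hcyc_len
  simp only [Walk.mem_support_append_iff, Walk.support_reverse, List.mem_reverse] at hx hy
  simp only [Walk.edges_append, Walk.edges_reverse, List.mem_append, List.mem_reverse,
    not_or] at he
  have hside : ∀ a ∈ P.support, ∀ b ∈ Q.support, a ∉ Q.support → b ∉ P.support →
      ¬ G.Adj a b := by
    intro a haP b hbQ haQ hbP
    refine hnoadj a ((hPA a haP).resolve_right ?_) b ((hQB b hbQ).resolve_right ?_)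
    · rintro (rfl | rfl)
      exacts [haQ Q.start_mem_support, haQ Q.end_mem_support]
    · rintro (rfl | rfl)
      exacts [hbP P.start_mem_support, hbP P.end_mem_support]
  have hxyP : ¬ (x ∈ P.support ∧ y ∈ P.support) := fun h => he.1 (hPc x h.1 y h.2 hxy)
  have hxyQ : ¬ (x ∈ Q.support ∧ y ∈ Q.support) := fun h => he.2 (hQc x h.1 y h.2 hxy)
  rcases hx with hxP | hxQ
  · have hyQ : y ∈ Q.support := hy.resolve_left fun hyP => hxyP ⟨hxP, hyP⟩
    exact hside x hxP y hyQ (fun hxQ => hxyQ ⟨hxQ, hyQ⟩) (fun hyP => hxyP ⟨hxP, hyP⟩) hxy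
  · have hyP : y ∈ P.support := hy.resolve_right fun hyQ => hxyQ ⟨hxQ, hyQ⟩
    exact hside y hyP x hxQ (fun hyQ => hxyQ ⟨hxQ, hyQ⟩) (fun hxP => hxyP ⟨hxP, hyP⟩) hxy.symm

namespace SimpleGraph

def IsSimplicialIn (G : SimpleGraph V) (s : Set V) (v : V) : Prop :=
  G.IsClique (G.neighborSet v ∩ s)

def HasNonadjSimplicialPair (G : SimpleGraph V) (s : Set V) : Prop :=
  ∃ a ∈ s, ∃ b ∈ s, a ≠ b ∧ ¬ G.Adj a b ∧ G.IsSimplicialIn s a ∧ G.IsSimplicialIn s b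

variable {s S : Set V} {x y u w : V}

lemma not_walkIn_pair (hxy : x ≠ y) (hadj : ¬ G.Adj x y) : ¬ G.WalkIn {x, y} x y := by
  rintro ⟨_ | ⟨h, q⟩, hp⟩
  · exact hxy rfl
  · rcases hp _ (List.mem_cons_of_mem _ q.start_mem_support) with rfl | rfl
    exacts [G.irrefl h, hadj h]

lemma exists_minimal_separator [Finite V] (hxy : x ≠ y) (hadj : ¬ G.Adj x y) :
    ∃ S ⊆ s, x ∉ S ∧ y ∉ S ∧ ¬ G.WalkIn (s \ S) x y ∧
      ∀ u ∈ S, G.WalkIn (s \ (S \ {u})) x y := by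
  have hpair : ¬ G.WalkIn (s \ (s \ {x, y})) x y := fun h =>
    not_walkIn_pair hxy hadj (h.mono fun z hz => by_contra fun h => hz.2 ⟨hz.1, h⟩)
  obtain ⟨S, ⟨hSs, hxS, hyS, hsep⟩, hmin⟩ := exists_minimal_of_wellFoundedLT
    (fun S : Set V => S ⊆ s ∧ x ∉ S ∧ y ∉ S ∧ ¬ G.WalkIn (s \ S) x y)
    ⟨s \ {x, y}, Set.sdiff_subset, by simp, by simp, hpair⟩
  refine ⟨S, hSs, hxS, hyS, hsep, fun u hu => by_contra fun h => ?_⟩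
  have := hmin ⟨Set.sdiff_subset.trans hSs, fun h => hxS h.1, fun h => hyS h.1, h⟩ Set.sdiff_subset
  exact (this hu).2 rfl

lemma exists_adj_of_walkIn_diff_singleton (hxS : x ∉ S) (hsep : ¬ G.WalkIn (s \ S) x y)
    (h : G.WalkIn (s \ (S \ {u})) x y) : ∃ a, G.WalkIn (s \ S) x a ∧ G.Adj a u := by
  obtain ⟨p, hp⟩ := h
  have hx : x ∈ s \ S := ⟨(hp x p.start_mem_support).1, hxS⟩
  obtain ⟨d, hd, hd₁, hd₂⟩ :=
    p.exists_boundary_dart {z | G.WalkIn (s \ S) x z} (WalkIn.refl hx) hsep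
  have hd₂s := hp _ (p.dart_snd_mem_support_of_mem_darts hd)
  refine ⟨d.fst, hd₁, ?_⟩
  by_cases hdu : d.snd = u
  · exact hdu ▸ d.adj
  · exact absurd (hd₁.trans_adj d.adj ⟨hd₂s.1, fun hS => hd₂s.2 ⟨hS, hdu⟩⟩) hd₂

lemma walkIn_component_union_pair (hxS : x ∉ S) (hsep : ¬ G.WalkIn (s \ S) x y)
    (hu : G.WalkIn (s \ (S \ {u})) x y) (hw : G.WalkIn (s \ (S \ {w})) x y) :
    G.WalkIn ({z | G.WalkIn (s \ S) x z} ∪ {u, w}) u w := by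
  obtain ⟨a, hxa, hau⟩ := exists_adj_of_walkIn_diff_singleton hxS hsep hu
  obtain ⟨b, hxb, hbw⟩ := exists_adj_of_walkIn_diff_singleton hxS hsep hw
  have hab : G.WalkIn {z | G.WalkIn (s \ S) x z} a b :=
    hxa.setOf_walkIn.symm.trans hxb.setOf_walkIn
  exact (((WalkIn.refl (by simp)).trans_adj hau.symm (.inl hxa)).trans
    (hab.mono Set.subset_union_left)).trans_adj hbw (by simp)

lemma exists_isSimplicialIn_component (hS : G.IsClique S) (hx : x ∈ s \ S)
    (h : G.IsClique ({z | G.WalkIn (s \ S) x z} ∪ S) ∨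
      G.HasNonadjSimplicialPair ({z | G.WalkIn (s \ S) x z} ∪ S)) :
    ∃ p, G.WalkIn (s \ S) x p ∧ G.IsSimplicialIn s p := by
  set C := {z | G.WalkIn (s \ S) x z}
  have hnbr : ∀ p ∈ C, G.neighborSet p ∩ s ⊆ G.neighborSet p ∩ (C ∪ S) := by
    rintro p hp z ⟨hpz, hz⟩
    refine ⟨hpz, ?_⟩
    by_cases hzS : z ∈ S
    · exact .inr hzS
    · exact .inl (hp.trans_adj hpz ⟨hz, hzS⟩)
  suffices ∃ p ∈ C, G.IsSimplicialIn (C ∪ S) p from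
    let ⟨p, hp, hps⟩ := this
    ⟨p, hp, hps.subset (hnbr p hp)⟩
  rcases h with hclique | ⟨a, ha, b, hb, hab, hadj, hsa, hsb⟩
  · exact ⟨x, WalkIn.refl hx, hclique.subset Set.inter_subset_right⟩
  rcases ha with ha | ha
  · exact ⟨a, ha, hsa⟩
  rcases hb with hb | hb
  · exact ⟨b, hb, hsb⟩
  exact absurd (hS ha hb hab) hadj

end SimpleGraph

theorem IsChordal.isClique_of_minimal_separator (hch : IsChordal G) {s S : Set V} {x y : V}
    (hxS : x ∉ S) (hyS : y ∉ S) (hsep : ¬ G.WalkIn (s \ S) x y)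
    (hmin : ∀ u ∈ S, G.WalkIn (s \ (S \ {u})) x y) : G.IsClique S := by
  intro u hu w hw huw
  have hdisj : Disjoint {z | G.WalkIn (s \ S) x z} {z | G.WalkIn (s \ S) y z} :=
    Set.disjoint_left.2 fun z hxz hyz => hsep (hxz.trans hyz.symm)
  refine hch.adj_of_walkIn_of_walkIn hdisj (fun a ha b hb hab => ?_) huw
    (walkIn_component_union_pair hxS hsep (hmin u hu) (hmin w hw))
    (walkIn_component_union_pair hyS (fun h => hsep h.symm) (hmin u hu).symm (hmin w hw).symm)
  exact Set.disjoint_left.1 hdisj (ha.trans_adj hab hb.right_mem) hb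

theorem IsChordal.isClique_or_hasNonadjSimplicialPair [Finite V] (hch : IsChordal G)
    (s : Set V) : G.IsClique s ∨ G.HasNonadjSimplicialPair s := by
  induction hn : s.ncard using Nat.strong_induction_on generalizing s with
  | _ n ih =>
  by_cases hs : G.IsClique s
  · exact .inl hs
  obtain ⟨x, hx, y, hy, hxy, hadj⟩ : ∃ x ∈ s, ∃ y ∈ s, x ≠ y ∧ ¬ G.Adj x y := by
    simpa [IsClique, Set.Pairwise] using hs
  obtain ⟨S, hSs, hxS, hyS, hsep, hmin⟩ := exists_minimal_separator (s := s) hxy hadj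
  have hS := hch.isClique_of_minimal_separator hxS hyS hsep hmin
  have side : ∀ {x y}, x ∈ s → x ∉ S → y ∈ s → y ∉ S → ¬ G.WalkIn (s \ S) x y →
      ∃ p, G.WalkIn (s \ S) x p ∧ G.IsSimplicialIn s p := by
    intro x y hx hxS hy hyS hsep
    refine exists_isSimplicialIn_component hS ⟨hx, hxS⟩ (ih _ ?_ _ rfl)
    rw [← hn]
    refine Set.ncard_lt_ncard ⟨Set.union_subset (fun z hz => hz.right_mem.1) hSs, fun h => ?_⟩
    rcases h hy with hy | hy
    exacts [hsep hy, hyS hy]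
  obtain ⟨a, hxa, ha⟩ := side hx hxS hy hyS hsep
  obtain ⟨b, hyb, hb⟩ := side hy hyS hx hxS fun h => hsep h.symm
  have hab : ¬ G.WalkIn (s \ S) a b := fun h => hsep ((hxa.trans h).trans hyb.symm)
  refine .inr ⟨a, hxa.right_mem.1, b, hyb.right_mem.1, ?_, ?_, ha, hb⟩
  · rintro rfl
    exact hab (WalkIn.refl hxa.right_mem)
  · exact fun h => hab ((WalkIn.refl hxa.right_mem).trans_adj h hyb.right_mem)

theorem IsChordal.exists_isSimplicialIn [Finite V] (hch : IsChordal G) {s : Set V}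
    (hs : s.Nonempty) : ∃ v ∈ s, G.IsSimplicialIn s v := by
  rcases hch.isClique_or_hasNonadjSimplicialPair s with h | ⟨a, ha, -, -, -, -, hsa, -⟩
  · obtain ⟨v, hv⟩ := hs
    exact ⟨v, hv, h.subset Set.inter_subset_right⟩
  · exact ⟨a, ha, hsa⟩

namespace SimpleGraph

lemma WalkIn.diff_singleton_of_isSimplicialIn {r : Set V} {a b v : V} (h : G.WalkIn r a b)
    (hv : G.IsSimplicialIn r v) (ha : a ≠ v) (hb : b ≠ v) : G.WalkIn (r \ {v}) a b := by
  obtain ⟨p, hp⟩ := h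
  -- `a'` is the current vertex `c` of the walk or, while the walk sits at `v`, a neighbour of `v`
  -- standing in for it.
  suffices key : ∀ {c} (q : G.Walk c b), (∀ x ∈ q.support, x ∈ r) → ∀ a' ∈ r, a' ≠ v →
      (a' = c ∨ c = v ∧ G.Adj v a') → G.WalkIn (r \ {v}) a' b from
    key p hp a (hp a p.start_mem_support) ha (.inl rfl)
  clear p hp
  intro c q
  induction q with
  | nil =>
    rintro - a' ha' ha'v (rfl | ⟨rfl, -⟩)
    exacts [WalkIn.refl ⟨ha', ha'v⟩, absurd rfl hb]
  | @cons c d b hcd q ih =>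
    intro hq a' ha' ha'v hc
    have hqr : ∀ x ∈ q.support, x ∈ r := fun x hx => hq x (List.mem_cons_of_mem _ hx)
    have hd : d ∈ r := hqr d q.start_mem_support
    by_cases hdv : d = v
    · subst hdv
      refine ih hb hqr a' ha' ha'v (.inr ⟨rfl, ?_⟩)
      rcases hc with rfl | ⟨rfl, -⟩
      exacts [hcd.symm, absurd hcd G.irrefl]
    have had : G.WalkIn (r \ {v}) a' d := by
      by_cases h : a' = d
      · subst h
        exact WalkIn.refl ⟨hd, hdv⟩
      refine (WalkIn.refl (s := r \ {v}) ⟨ha', ha'v⟩).trans_adj ?_ ⟨hd, hdv⟩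
      rcases hc with rfl | ⟨rfl, hva'⟩
      exacts [hcd, hv ⟨hva', ha'⟩ ⟨hcd, hd⟩ h]
    exact had.trans (ih hb hqr d hd hdv (.inl rfl))

def ConnectedUnderDeletion (G : SimpleGraph V) (t : ℕ) (s : Set V) : Prop :=
  ∀ S : Set V, S.ncard < t → ∀ u ∈ s \ S, ∀ v ∈ s \ S, G.WalkIn (s \ S) u v

namespace ConnectedUnderDeletion

variable {t : ℕ} {s : Set V} {v : V}

lemma diff_singleton (h : G.ConnectedUnderDeletion t s) (hv : G.IsSimplicialIn s v) :
    G.ConnectedUnderDeletion t (s \ {v}) := by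
  intro S hS a ha b hb
  have hvS : G.IsSimplicialIn (s \ S) v :=
    hv.subset (Set.inter_subset_inter_right _ Set.sdiff_subset)
  have := (h S hS a ⟨ha.1.1, ha.2⟩ b ⟨hb.1.1, hb.2⟩).diff_singleton_of_isSimplicialIn hvS
    ha.1.2 hb.1.2
  rwa [Set.sdiff_sdiff_comm] at this

lemma min_le_ncard_neighborSet_inter [Finite V] (h : G.ConnectedUnderDeletion t s)
    (hv : v ∈ s) : min t (s.ncard - 1) ≤ (G.neighborSet v ∩ s).ncard := by
  by_contra! hlt
  set M := G.neighborSet v ∩ s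
  have hvM : v ∉ M := fun h => G.irrefl h.1
  obtain ⟨z, hz, hzM⟩ : ∃ z ∈ s \ {v}, z ∉ M := Set.exists_mem_notMem_of_ncard_lt_ncard
    (by rw [Set.ncard_sdiff_singleton_of_mem hv]; omega)
  obtain ⟨p, hp⟩ := h M (by omega) v ⟨hv, hvM⟩ z ⟨hz.1, hzM⟩
  cases p with
  | nil => exact hz.2 rfl
  | cons hvd q =>
    have hd := hp _ (List.mem_cons_of_mem _ q.start_mem_support)
    exact hd.2 ⟨hvd, hd.1⟩

end ConnectedUnderDeletion

end SimpleGraph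

lemma hull_subset_hull_of_le {τ τ' : V → ℤ} {D : Set V} (h : ∀ u, τ u ≤ τ' u) :
    hull G τ' D ⊆ hull G τ D :=
  fun _ hv => Set.mem_sInter.2 fun H ⟨hDH, hH⟩ =>
    Set.mem_sInter.1 hv H ⟨hDH, fun u hu => hH u ((h u).trans hu)⟩

lemma mem_hull_of_le_ncard [Finite V] {τ : V → ℤ} {D s : Set V} {v : V}
    (hs : s ⊆ hull G τ D) (hv : τ v ≤ (G.neighborSet v ∩ s).ncard) : v ∈ hull G τ D :=
  Set.mem_sInter.2 fun H ⟨hDH, hH⟩ => hH v <| hv.trans <| Nat.cast_le.2 <| Set.ncard_le_ncard <|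
    Set.inter_subset_inter_right _ (hs.trans (Set.sInter_subset_of_mem ⟨hDH, hH⟩))

lemma Finset.sum_range_tsub_le (t n : ℕ) : ∑ k ∈ Finset.range n, (t - k) ≤ t * (t + 1) / 2 :=
  calc ∑ k ∈ Finset.range n, (t - k) ≤ ∑ k ∈ Finset.range (t + 1), (t - k) :=
        Finset.sum_le_sum_of_ne_zero fun k _ hk => Finset.mem_range.2 (by omega)
    _ = ∑ k ∈ Finset.range (t + 1), k := by simpa using Finset.sum_range_reflect id (t + 1)
    _ = t * (t + 1) / 2 := by rw [Finset.sum_range_id, Nat.add_sub_cancel, mul_comm]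

theorem IsChordal.exists_incentive [Fintype V] (hch : IsChordal G) {t : ℕ} {τ : V → ℤ}
    (hτ : ∀ u, τ u ≤ t) (s : Finset V) (hs : G.ConnectedUnderDeletion t s) :
    ∃ σ : V → ℕ, (s : Set V) ⊆ hull G (fun u => τ u - σ u) ∅ ∧
      ∑ u, σ u ≤ ∑ k ∈ Finset.range s.card, (t - k) := by
  classical
  induction s using Finset.strongInduction with
  | H s ih =>
  rcases s.eq_empty_or_nonempty with rfl | hne
  · exact ⟨0, by simp, by simp⟩
  obtain ⟨v, hv, hsimp⟩ := hch.exists_isSimplicialIn (s := (s : Set V)) hne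
  obtain ⟨σ, hσ, hsum⟩ :=
    ih (s.erase v) (s.erase_ssubset hv) (by simpa using hs.diff_singleton hsimp)
  have hdeg := hs.min_le_ncard_neighborSet_inter hv
  rw [Set.ncard_coe_finset, ← Finset.card_erase_of_mem hv] at hdeg
  set x := (τ v - min t (s.erase v).card).toNat
  refine ⟨σ + Pi.single v x, ?_, ?_⟩
  · have hσ' : ((s.erase v : Finset V) : Set V) ⊆
        hull G (fun u => τ u - ((σ + Pi.single v x : V → ℕ) u : ℕ)) ∅ :=
      hσ.trans (hull_subset_hull_of_le fun u => by simp only [Pi.add_apply, Nat.cast_add]; omega)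
    rw [← Finset.insert_erase hv, Finset.coe_insert, Set.insert_subset_iff]
    refine ⟨mem_hull_of_le_ncard hσ' ?_, hσ'⟩
    have hnbr : G.neighborSet v ∩ ↑(s.erase v) = G.neighborSet v ∩ ↑s := by
      rw [Finset.coe_erase, ← Set.inter_sdiff_assoc,
        Set.sdiff_singleton_eq_self fun h => G.irrefl h.1]
    have hx := Int.self_le_toNat (τ v - min t (s.erase v).card)
    rw [hnbr]
    simp only [Pi.add_apply, Pi.single_eq_same, Nat.cast_add]
    omega
  · simp only [Pi.add_apply]
    rw [Finset.sum_add_distrib, Finset.sum_pi_single', ← Finset.card_erase_add_one hv,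
      Finset.sum_range_succ]
    have := hτ v
    have : x ≤ t - (s.erase v).card := by omega
    simp only [Finset.mem_univ, if_true]
    omega

lemma TConnected.connectedUnderDeletion_univ [Fintype V] {t : ℕ} (h : TConnected G t) :
    G.ConnectedUnderDeletion t Set.univ := by
  intro S hS u hu v hv
  rw [← Set.compl_eq_univ_sdiff] at hu hv ⊢
  exact (h.2 S hS).walkIn_induce hu hv

end

/-- `pi(G,τ) ≤ t(t+1)/2` for `t`-connected chordal graphs with
thresholds at most `t`. -/
theorem stmt_7 {V : Type} [Fintype V] (G : SimpleGraph V) (t : ℕ)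
    (hcon : TConnected G t) (hch : IsChordal G)
    (τ : V → ℤ) (hτ : ∀ u : V, τ u ≤ t) :
    piNum G τ ≤ t * (t + 1) / 2 := by
  obtain ⟨σ, hhull, hsum⟩ :=
    hch.exists_incentive hτ Finset.univ (by simpa using hcon.connectedUnderDeletion_univ)
  calc piNum G τ ≤ ∑ u, σ u :=
        Nat.sInf_le ⟨σ, Set.eq_univ_of_univ_subset (by simpa using hhull), rfl⟩
    _ ≤ ∑ k ∈ Finset.range (Fintype.card V), (t - k) := hsum
    _ ≤ t * (t + 1) / 2 := Finset.sum_range_tsub_le t _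
end

section
/- Let G be a graph with threshold function τ, and let A, B be sets of vertices of G. Then B is an A-strong region if and only if B ∩ (D \ A) ≠ ∅ for every dynamic monopoly D of (G, τ) containing A. -/
open SimpleGraph

universe u

/-- `B` is an `A`-strong region iff every dynamic monopoly containing
`A` meets `B ∖ A`. -/
theorem stmt_11 {V : Type} (G : SimpleGraph V) (τ : V → ℤ) (A B : Set V) :
    StrongRegion G τ A B ↔
      ∀ D : Set V, A ⊆ D → IsDynMonopoly G τ D → (B ∩ (D \ A)).Nonempty := by
  constructor
  · intro hs D hAD hD
    by_contra hne
    rw [Set.not_nonempty_iff_eq_empty] at hne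
    apply hs
    intro b hb H hH
    obtain ⟨hsub, hcl⟩ := hH
    -- H ∪ Bᶜ contains D and is closed, so hull D ⊆ H ∪ Bᶜ
    have hDsub : D ⊆ H ∪ Bᶜ := by
      intro d hd
      by_cases hdB : d ∈ B
      · by_cases hdA : d ∈ A
        · exact Or.inl (hsub (Or.inl hdA))
        · exact absurd (show d ∈ B ∩ (D \ A) from ⟨hdB, hd, hdA⟩) (by
            rw [hne]; exact not_false_iff.mpr trivial |>.elim ∘ id)
      · exact Or.inr hdB
    have hclosed : HullClosed G τ (H ∪ Bᶜ) := by
      intro u hu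
      by_cases huB : u ∈ B
      · have heq : G.neighborSet u ∩ (H ∪ Bᶜ) = G.neighborSet u ∩ H := by
          apply Set.eq_of_subset_of_subset
          · rintro v ⟨hv, hvH | hvB⟩
            · exact ⟨hv, hvH⟩
            · exact ⟨hv, hsub (Or.inr ⟨hvB, u, huB, hv⟩)⟩
          · exact Set.inter_subset_inter_right _ Set.subset_union_left
        rw [heq] at hu
        exact Or.inl (hcl u hu)
      · exact Or.inr huB
    have : b ∈ hull G τ D := by
      rw [IsDynMonopoly] at hD
      rw [hD]; trivial
    have hmem : b ∈ H ∪ Bᶜ := this (H ∪ Bᶜ) ⟨hDsub, hclosed⟩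
    rcases hmem with h | h
    · exact h
    · exact absurd hb h
  · intro h hBsub
    have hNsub : A ∪ Nplus G B ⊆ A ∪ Bᶜ := by
      rintro x (hx | hx)
      · exact Or.inl hx
      · exact Or.inr hx.1
    have hmono : hull G τ (A ∪ Nplus G B) ⊆ hull G τ (A ∪ Bᶜ) := by
      intro x hx H hH
      exact hx H ⟨hNsub.trans hH.1, hH.2⟩
    have hmonop : IsDynMonopoly G τ (A ∪ Bᶜ) := by
      rw [IsDynMonopoly]
      apply Set.eq_univ_of_univ_subset
      intro x _
      by_cases hxB : x ∈ B
      · exact hmono (hBsub hxB)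
      · exact fun H hH => hH.1 (Or.inr hxB)
    obtain ⟨x, hxB, hxD, hxA⟩ := h (A ∪ Bᶜ) Set.subset_union_left hmonop
    rcases hxD with h' | h'
    · exact hxA h'
    · exact h' hxB
end

section
/- Let G be a graph with threshold function τ, and let A, B be sets of vertices of G. If B is an A-weak region and N⁻(B) ⊆ A, then B ⊆ H_{(G,τ)}(A). -/
open SimpleGraph

universe u

/-- an `A`-weak region with boundary in `A` lies in the hull of `A`. -/
theorem stmt_12 {V : Type} (G : SimpleGraph V) (τ : V → ℤ) (A B : Set V)
    (hweak : ¬ StrongRegion G τ A B) (hbd : Nminus G B ⊆ A) :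
    B ⊆ hull G τ A := by
  rw [StrongRegion, not_not] at hweak
  intro v hv
  rw [hull, Set.mem_sInter]
  rintro H ⟨hAH, hcl⟩
  have key : v ∈ H ∪ Bᶜ := by
    apply hweak hv (H ∪ Bᶜ)
    refine ⟨Set.union_subset (hAH.trans Set.subset_union_left) ?_, ?_⟩
    · intro x hx
      exact Or.inr hx.1
    · intro u hu
      by_cases hB : u ∈ B
      · by_cases hnb : ∃ w ∈ Bᶜ, G.Adj w u
        · exact Or.inl (hAH (hbd ⟨fun h => h hB, hnb⟩))
        · push_neg at hnb
          have heq : G.neighborSet u ∩ (H ∪ Bᶜ) = G.neighborSet u ∩ H := by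
            ext w
            simp only [Set.mem_inter_iff, Set.mem_union, Set.mem_compl_iff,
              SimpleGraph.mem_neighborSet]
            constructor
            · rintro ⟨hadj, hw | hw⟩
              · exact ⟨hadj, hw⟩
              · exact absurd hadj.symm (hnb w hw)
            · rintro ⟨hadj, hw⟩; exact ⟨hadj, Or.inl hw⟩
          rw [heq] at hu
          exact Or.inl (hcl u hu)
      · exact Or.inr hB
  rcases key with h | h
  · exact h
  · exact absurd hv h
end

section
/- Let G be a graph with threshold function τ, and let A, B, Y be sets of vertices of G. If B is an A-strong region and Y ⊆ B satisfies Y ⊆ H_{(G,τ)}(A) and N⁻(Y) ⊆ A, then B \ Y is an A-strong region. -/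
open SimpleGraph

universe u

/-- removing a hull-contained piece `Y` with boundary in `A` from an
`A`-strong region leaves an `A`-strong region. -/
theorem stmt_13 {V : Type} (G : SimpleGraph V) (τ : V → ℤ) (A B Y : Set V)
    (hstrong : StrongRegion G τ A B) (hYB : Y ⊆ B)
    (hYhull : Y ⊆ hull G τ A) (hbd : Nminus G Y ⊆ A) :
    StrongRegion G τ A (B \ Y) := by
  have hull_min : ∀ {D H : Set V}, D ⊆ H → HullClosed G τ H → hull G τ D ⊆ H :=
    fun h1 h2 => Set.sInter_subset_of_mem ⟨h1, h2⟩
  have hull_mono : ∀ {D E : Set V}, D ⊆ E → hull G τ D ⊆ hull G τ E := by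
    intro D E hDE
    apply Set.subset_sInter
    rintro H ⟨h1, h2⟩
    exact Set.sInter_subset_of_mem ⟨hDE.trans h1, h2⟩
  have absorb : ∀ {X A' : Set V}, A' ⊆ X →
      hull G τ (X ∪ hull G τ A') ⊆ hull G τ X := by
    intro X A' hAX
    apply Set.subset_sInter
    rintro H ⟨h1, h2⟩
    refine Set.sInter_subset_of_mem ⟨Set.union_subset h1 ?_, h2⟩
    exact hull_min (hAX.trans h1) h2
  intro hcon
  apply hstrong
  intro v hvB
  by_cases hvY : v ∈ Y
  · exact hull_mono Set.subset_union_left (hYhull hvY)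
  · have hv : v ∈ hull G τ (A ∪ Nplus G (B \ Y)) := hcon ⟨hvB, hvY⟩
    have hsub : A ∪ Nplus G (B \ Y) ⊆ (A ∪ Nplus G B) ∪ hull G τ A := by
      rintro w (hw | ⟨hwn, u, hu, hadj⟩)
      · exact Or.inl (Or.inl hw)
      · by_cases hwB : w ∈ B
        · have hwY : w ∈ Y := by
            by_contra h
            exact hwn ⟨hwB, h⟩
          exact Or.inr (hYhull hwY)
        · exact Or.inl (Or.inr ⟨hwB, u, hu.1, hadj⟩)
    exact absorb Set.subset_union_left (hull_mono hsub hv)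
end
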